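/- arXiv:2005.01430 — 5 statements merged into one kernel-verified Lean document; each statement's English description precedes it below -/
import Mathlib

section
/- Let E be an AL-space and let S = (S_t)_{t∈(0,∞)} be a bounded semigroup of positive operators on E. If the fixed space of the dual semigroup S* is {0}, then S_t x → 0 in norm as t → ∞ for every x ∈ E. -/
/-!
Since the norm of an AL-space is additive on the positive cone, `y ↦ ‖y⁺‖ - ‖y⁻‖` is a continuous
linear functional `e` with `e y = ‖y‖` for `y ≥ 0`. If `‖S t y‖ ≥ ε > 0` for some `y ≥ 0` and all
`t > 0`, then a translation-invariant mean (a Banach limit over the semigroup `[0, ∞)`, built as an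
ultrafilter limit of averages over finite grids) of `t ↦ e (S t x)` is an `S*`-fixed functional
`φ` with `φ y ≥ ε`, which is impossible. So `‖S t y‖` gets arbitrarily small, and boundedness of
the semigroup turns this into `S t y → 0`. A general `x` is split as `x⁺ - x⁻`.
-/

open Filter Topology

/-- For `L = [r₁, …, rₘ]`, the mean of `f` over the grid `{∑ kᵢ • rᵢ : kᵢ < n}`. -/
noncomputable def gridAverage {M : Type*} [AddCommMonoid M] : List M → ℕ → (M → ℝ) →ₗ[ℝ] ℝ
  | [], _ => LinearMap.proj 0
  | r :: L, n => (n : ℝ)⁻¹ •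
      ∑ k ∈ Finset.range n, (gridAverage L n).comp (LinearMap.funLeft ℝ ℝ (· + k • r))

namespace gridAverage

variable {M : Type*} [AddCommMonoid M]

@[simp]
theorem nil_apply (n : ℕ) (f : M → ℝ) : gridAverage [] n f = f 0 := rfl

theorem cons_apply (r : M) (L : List M) (n : ℕ) (f : M → ℝ) :
    gridAverage (r :: L) n f =
      (n : ℝ)⁻¹ * ∑ k ∈ Finset.range n, gridAverage L n (fun τ => f (τ + k • r)) := by
  simp only [gridAverage, LinearMap.smul_apply, LinearMap.sum_apply, LinearMap.comp_apply,
    smul_eq_mul]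
  rfl

theorem mono (L : List M) (n : ℕ) {f g : M → ℝ} (h : f ≤ g) :
    gridAverage L n f ≤ gridAverage L n g := by
  induction L generalizing f g with
  | nil => exact h 0
  | cons r L ih =>
    simp only [cons_apply]
    gcongr with k
    exact ih fun τ => h _

theorem apply_const (L : List M) {n : ℕ} (hn : n ≠ 0) (c : ℝ) :
    gridAverage L n (fun _ => c) = c := by
  induction L with
  | nil => rfl
  | cons r L ih =>
    simp only [cons_apply, ih, Finset.sum_const, Finset.card_range, nsmul_eq_mul]
    field_simp

theorem abs_apply_le (L : List M) {n : ℕ} (hn : n ≠ 0) {f : M → ℝ} {B : ℝ}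
    (hf : ∀ τ, |f τ| ≤ B) : |gridAverage L n f| ≤ B := by
  rw [abs_le]
  constructor
  · simpa only [apply_const L hn] using mono L n fun τ => (abs_le.mp (hf τ)).1
  · simpa only [apply_const L hn] using mono L n fun τ => (abs_le.mp (hf τ)).2

theorem abs_shift_sub_le {L : List M} {r : M} (hr : r ∈ L) {n : ℕ} (hn : n ≠ 0) {f : M → ℝ}
    {B : ℝ} (hf : ∀ τ, |f τ| ≤ B) :
    |gridAverage L n (fun τ => f (τ + r)) - gridAverage L n f| ≤ 2 * B / n := by
  induction L generalizing f with
  | nil => simp at hr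
  | cons s L ih =>
    simp only [cons_apply, ← mul_sub, ← Finset.sum_sub_distrib]
    rw [abs_mul, abs_inv, Nat.abs_cast, inv_mul_le_iff₀ (by positivity),
      mul_div_cancel₀ _ (by positivity)]
    rcases List.mem_cons.mp hr with rfl | hr
    · have hbound (k : ℕ) : |gridAverage L n (fun τ => f (τ + k • r))| ≤ B :=
        abs_apply_le L hn fun τ => hf _
      simp only [add_assoc, ← succ_nsmul]
      rw [Finset.sum_range_sub (fun k => gridAverage L n (fun τ => f (τ + k • r)))]
      exact (abs_sub _ _).trans (by linarith [hbound n, hbound 0])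
    · calc _ ≤ ∑ k ∈ Finset.range n, 2 * B / n := by
            refine (Finset.abs_sum_le_sum_abs _ _).trans (Finset.sum_le_sum fun k _ => ?_)
            simpa only [add_right_comm _ r] using ih hr fun τ => hf (τ + k • s)
        _ = 2 * B := by simp only [Finset.sum_const, Finset.card_range, nsmul_eq_mul]; field_simp

end gridAverage

theorem exists_shift_invariant_functional {E M : Type*} [NormedAddCommGroup E] [NormedSpace ℝ E]
    [AddCommMonoid M] (ψ : M → StrongDual ℝ E) {C : ℝ} (hψ : ∀ τ, ‖ψ τ‖ ≤ C) :
    ∃ φ : StrongDual ℝ E, (∀ r y y', (∀ τ, ψ τ y' = ψ (τ + r) y) → φ y' = φ y) ∧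
      ∀ y δ, (∀ τ, δ ≤ ψ τ y) → δ ≤ φ y := by
  classical
  have hψy (y : E) (τ : M) : |ψ τ y| ≤ C * ‖y‖ :=
    ((ψ τ).le_opNorm y).trans (mul_le_mul_of_nonneg_right (hψ τ) (norm_nonneg y))
  let Φ (i : Finset M × ℕ) : E →ₗ[ℝ] ℝ :=
    (gridAverage i.1.toList (i.2 + 1)).comp (LinearMap.pi fun τ => (ψ τ : E →ₗ[ℝ] ℝ))
  have hΦ (i : Finset M × ℕ) (z : E) : Φ i z = gridAverage i.1.toList (i.2 + 1) fun τ => ψ τ z :=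
    rfl
  have hΦ_le (i : Finset M × ℕ) (y : E) : |Φ i y| ≤ C * ‖y‖ :=
    gridAverage.abs_apply_le _ i.2.succ_ne_zero (hψy y)
  let U : Ultrafilter (Finset M × ℕ) := .of atTop
  have hK : IsCompact (Set.univ.pi fun y : E => Set.Icc (-(C * ‖y‖)) (C * ‖y‖)) :=
    isCompact_univ_pi fun _ => isCompact_Icc
  obtain ⟨g, hgK, hg⟩ := hK.ultrafilter_le_nhds (U.map fun i => ⇑(Φ i)) <| by
    rw [Ultrafilter.coe_map, le_principal_iff, mem_map]
    exact univ_mem' fun i y _ => abs_le.mp (hΦ_le i y)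
  replace hg : Tendsto (fun i y => Φ i y) U (𝓝 g) := hg
  let φ : StrongDual ℝ E := (linearMapOfTendsto g Φ hg).mkContinuous C fun y =>
    abs_le.mpr (hgK y (Set.mem_univ y))
  have hφ (y : E) : Tendsto (fun i => Φ i y) U (𝓝 (φ y)) :=
    ((continuous_apply y).tendsto g).comp hg
  refine ⟨φ, fun r y y' hy' => ?_, fun y δ hδ => ?_⟩
  · have hmesh : Tendsto (fun i : Finset M × ℕ => 2 * (C * ‖y‖) / (i.2 + 1 : ℕ)) atTop (𝓝 0) :=
      (tendsto_const_div_atTop_nhds_zero_nat _).comp <| (tendsto_add_atTop_nat 1).comp <|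
        tendsto_atTop_atTop_of_monotone (fun _ _ h => h.2) fun n => ⟨(∅, n), le_rfl⟩
    have hdiff : Tendsto (fun i => Φ i y' - Φ i y) atTop (𝓝 0) := by
      refine squeeze_zero_norm' ?_ hmesh
      filter_upwards [eventually_ge_atTop (({r} : Finset M), 0)] with i hi
      have hr : r ∈ i.1.toList := Finset.mem_toList.mpr (hi.1 (Finset.mem_singleton_self r))
      simpa only [hΦ, hy', Real.norm_eq_abs] using
        gridAverage.abs_shift_sub_le hr i.2.succ_ne_zero (hψy y)
    exact sub_eq_zero.mp <|
      tendsto_nhds_unique ((hφ y').sub (hφ y)) (hdiff.mono_left (Ultrafilter.of_le _))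
  · refine ge_of_tendsto (hφ y) (Eventually.of_forall fun i => ?_)
    calc δ = gridAverage i.1.toList (i.2 + 1) (fun _ => δ) :=
          (gridAverage.apply_const _ i.2.succ_ne_zero δ).symm
      _ ≤ Φ i y := gridAverage.mono _ _ hδ

theorem exists_dual_eq_norm_of_nonneg {E : Type*} [NormedAddCommGroup E] [Lattice E]
    [HasSolidNorm E] [IsOrderedAddMonoid E] [NormedSpace ℝ E]
    (hAL : ∀ x y : E, 0 ≤ x → 0 ≤ y → ‖x + y‖ = ‖x‖ + ‖y‖) :
    ∃ e : StrongDual ℝ E, ∀ y, 0 ≤ y → e y = ‖y‖ := by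
  have hAL₃ {a b c : E} (ha : 0 ≤ a) (hb : 0 ≤ b) (hc : 0 ≤ c) :
      ‖a + b + c‖ = ‖a‖ + ‖b‖ + ‖c‖ := by
    rw [hAL _ _ (add_nonneg ha hb) hc, hAL _ _ ha hb]
  have hadd (x y : E) : ‖(x + y)⁺‖ - ‖(x + y)⁻‖ = (‖x⁺‖ - ‖x⁻‖) + (‖y⁺‖ - ‖y⁻‖) := by
    have h : (x + y)⁺ + x⁻ + y⁻ = (x + y)⁻ + x⁺ + y⁺ := by
      rw [← sub_eq_zero]
      calc _ = ((x + y)⁺ - (x + y)⁻) - ((x⁺ - x⁻) + (y⁺ - y⁻)) := by abel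
        _ = 0 := by simp only [posPart_sub_negPart, sub_self]
    have := congrArg norm h
    simp only [hAL₃ (posPart_nonneg _) (negPart_nonneg _) (negPart_nonneg _),
      hAL₃ (negPart_nonneg _) (posPart_nonneg _) (posPart_nonneg _)] at this
    linarith
  let e := (AddMonoidHom.mk' (fun y : E => ‖y⁺‖ - ‖y⁻‖) hadd).toRealLinearMap
    (show Continuous fun y : E => ‖y⁺‖ - ‖y⁻‖ by fun_prop)
  refine ⟨e, fun y hy => ?_⟩
  change ‖y⁺‖ - ‖y⁻‖ = ‖y‖
  rw [posPart_of_nonneg hy, negPart_of_nonneg hy, norm_zero, sub_zero]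

open NNReal

section Semigroup

variable {E : Type*} [NormedAddCommGroup E] [NormedSpace ℝ E] (S : ℝ → E →L[ℝ] E) {C : ℝ}

theorem exists_semigroup_invariant_dual
    (hsg : ∀ s t : ℝ, 0 < s → 0 < t → S (s + t) = (S s).comp (S t))
    (hC : ∀ t : ℝ, 0 < t → ‖S t‖ ≤ C) (e : StrongDual ℝ E) :
    ∃ φ : StrongDual ℝ E, (∀ t : ℝ, 0 < t → ∀ x : E, φ (S t x) = φ x) ∧
      ∀ x δ, (∀ t : ℝ, 0 < t → δ ≤ e (S t x)) → δ ≤ φ x := by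
  have hτ (τ : ℝ≥0) : (0 : ℝ) < τ + 1 := by positivity
  -- Index by `τ + 1` since `S 0` is not part of the semigroup.
  obtain ⟨φ, hφS, hφle⟩ := exists_shift_invariant_functional (fun τ : ℝ≥0 => e ∘L S (τ + 1))
    (C := ‖e‖ * C) fun τ => (e.opNorm_comp_le _).trans (by gcongr; exact hC _ (hτ τ))
  refine ⟨φ, fun t ht x => hφS t.toNNReal x _ fun τ => ?_,
    fun x δ hδ => hφle x δ fun τ => hδ _ (hτ τ)⟩
  rw [ContinuousLinearMap.comp_apply, ContinuousLinearMap.comp_apply, NNReal.coe_add,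
    Real.coe_toNNReal t ht.le, add_right_comm, hsg _ _ (hτ τ) ht, ContinuousLinearMap.comp_apply]

theorem tendsto_zero_of_forall_exists_norm_lt
    (hsg : ∀ s t : ℝ, 0 < s → 0 < t → S (s + t) = (S s).comp (S t))
    (hC : ∀ t : ℝ, 0 < t → ‖S t‖ ≤ C) {x : E} (hx : ∀ ε > 0, ∃ t > 0, ‖S t x‖ < ε) :
    Tendsto (fun t => S t x) atTop (𝓝 0) := by
  rw [NormedAddGroup.tendsto_nhds_zero]
  intro ε hε
  obtain ⟨t₀, ht₀, hx₀⟩ := hx (ε / (|C| + 1)) (by positivity)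
  filter_upwards [eventually_gt_atTop t₀] with t ht
  have hSt : S t x = S (t - t₀) (S t₀ x) := by
    rw [← ContinuousLinearMap.comp_apply, ← hsg _ _ (sub_pos.mpr ht) ht₀, sub_add_cancel]
  calc ‖S t x‖ ≤ ‖S (t - t₀)‖ * ‖S t₀ x‖ := hSt ▸ (S (t - t₀)).le_opNorm _
    _ ≤ (|C| + 1) * ‖S t₀ x‖ := by
      gcongr
      linarith [hC _ (sub_pos.mpr ht), le_abs_self C]
    _ < (|C| + 1) * (ε / (|C| + 1)) := by gcongr
    _ = ε := by field_simp

end Semigroup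

theorem al_space_semigroup_tendsto_zero_of_trivial_dual_fixed_space_general
    {E : Type*} [NormedAddCommGroup E] [Lattice E] [HasSolidNorm E] [IsOrderedAddMonoid E] [NormedSpace ℝ E]
    (hAL : ∀ x y : E, 0 ≤ x → 0 ≤ y → ‖x + y‖ = ‖x‖ + ‖y‖)
    (S : ℝ → E →L[ℝ] E)
    (hsg : ∀ s t : ℝ, 0 < s → 0 < t → S (s + t) = (S s).comp (S t))
    (hbdd : ∃ C : ℝ, ∀ t : ℝ, 0 < t → ‖S t‖ ≤ C)
    (hpos : ∀ t : ℝ, 0 < t → ∀ x : E, 0 ≤ x → 0 ≤ S t x)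
    -- the fixed space of the dual semigroup is `{0}`:
    (hfix : ∀ φ : StrongDual ℝ E, (∀ t : ℝ, 0 < t → ∀ x : E, φ (S t x) = φ x) → φ = 0) :
    ∀ x : E, Tendsto (fun t : ℝ => S t x) atTop (𝓝 (0 : E)) := by
  obtain ⟨C, hC⟩ := hbdd
  obtain ⟨e, he⟩ := exists_dual_eq_norm_of_nonneg hAL
  obtain ⟨φ, hφS, hφle⟩ := exists_semigroup_invariant_dual S hsg hC e
  have hφ : φ = 0 := hfix φ hφS
  have hsmall (y : E) (hy : 0 ≤ y) (ε : ℝ) (hε : 0 < ε) : ∃ t > 0, ‖S t y‖ < ε := by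
    by_contra! hlarge
    have hφy := hφle y ε fun t ht => (he _ (hpos t ht y hy)).symm ▸ hlarge t ht
    rw [hφ, zero_apply] at hφy
    linarith
  intro x
  have hlim := (tendsto_zero_of_forall_exists_norm_lt S hsg hC (hsmall _ (posPart_nonneg x))).sub
    (tendsto_zero_of_forall_exists_norm_lt S hsg hC (hsmall _ (negPart_nonneg x)))
  simpa only [← map_sub, posPart_sub_negPart, sub_zero] using hlim

/-- Let `E` be an AL-space and `S = (S t)_{t ∈ (0,∞)}` a bounded semigroup of positive
operators on `E`. If the fixed space of the dual semigroup `S*` is trivial, then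
`S t x → 0` in norm as `t → ∞` for every `x ∈ E`. -/
theorem al_space_semigroup_tendsto_zero_of_trivial_dual_fixed_space
    {E : Type*} [NormedAddCommGroup E] [Lattice E] [HasSolidNorm E] [IsOrderedAddMonoid E] [NormedSpace ℝ E] [CompleteSpace E]
    (hAL : ∀ x y : E, 0 ≤ x → 0 ≤ y → ‖x + y‖ = ‖x‖ + ‖y‖)
    (S : ℝ → E →L[ℝ] E)
    (hsg : ∀ s t : ℝ, 0 < s → 0 < t → S (s + t) = (S s).comp (S t))
    (hbdd : ∃ C : ℝ, ∀ t : ℝ, 0 < t → ‖S t‖ ≤ C)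
    (hpos : ∀ t : ℝ, 0 < t → ∀ x : E, 0 ≤ x → 0 ≤ S t x)
    -- the fixed space of the dual semigroup is `{0}`:
    (hfix : ∀ φ : StrongDual ℝ E, (∀ t : ℝ, 0 < t → ∀ x : E, φ (S t x) = φ x) → φ = 0) :
    ∀ x : E, Tendsto (fun t : ℝ => S t x) atTop (𝓝 (0 : E)) :=
  al_space_semigroup_tendsto_zero_of_trivial_dual_fixed_space_general hAL S hsg hbdd hpos hfix
end

section
/- Let E be a Banach space, F a closed subspace of E, and S = (S_t)_{t∈(0,∞)} a bounded semigroup on E such that S_t F ⊆ F for all t > 0. Denote by S^F the restriction of the semigroup to F and by S^{E/F} the induced quotient semigroup on E/F. Then the following are equivalent: (i) S_t converges strongly as t → ∞ and the range of the limit operator lies in F; (ii) S_t^{E/F} converges strongly to zero and S_t^F converges strongly as t → ∞. -/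
open Filter Topology

/-- Let `E` be a Banach space, `F` a closed subspace of `E`, and `S = (S t)_{t ∈ (0,∞)}` a
bounded semigroup on `E` leaving `F` invariant. Then the following are equivalent:
(i) `S t` converges strongly as `t → ∞` and the range of the limit operator lies in `F`;
(ii) the quotient semigroup on `E ⧸ F` converges strongly to zero and the restricted
semigroup on `F` converges strongly as `t → ∞`. -/
theorem semigroup_strong_convergence_iff_quotient_and_restriction
    {E : Type*} [NormedAddCommGroup E] [NormedSpace ℝ E] [CompleteSpace E]
    (F : Submodule ℝ E) (hF : IsClosed (F : Set E))
    (S : ℝ → E →L[ℝ] E)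
    (hsg : ∀ s t : ℝ, 0 < s → 0 < t → S (s + t) = (S s).comp (S t))
    (hbdd : ∃ C : ℝ, ∀ t : ℝ, 0 < t → ‖S t‖ ≤ C)
    (hinv : ∀ t : ℝ, 0 < t → ∀ x ∈ F, S t x ∈ F) :
    -- (i) strong convergence with limit in `F`
    (∀ x : E, ∃ y ∈ F, Tendsto (fun t : ℝ => S t x) atTop (𝓝 y)) ↔
    -- (ii) the quotient semigroup converges strongly to zero and the restriction converges
      ((∀ x : E, Tendsto (fun t : ℝ => (Submodule.Quotient.mk (S t x) : E ⧸ F)) atTop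
          (𝓝 (0 : E ⧸ F))) ∧
        (∀ x ∈ F, ∃ y ∈ F, Tendsto (fun t : ℝ => S t x) atTop (𝓝 y))) := by
  obtain ⟨C, hC⟩ := hbdd
  set C' : ℝ := max C 1 with hC'
  have hC'pos : 0 < C' := lt_of_lt_of_le one_pos (le_max_right _ _)
  have hCle : ∀ t : ℝ, 0 < t → ‖S t‖ ≤ C' := fun t ht => (hC t ht).trans (le_max_left _ _)
  constructor
  · rintro h
    constructor
    · intro x
      obtain ⟨y, hyF, hy⟩ := h x
      rw [tendsto_zero_iff_norm_tendsto_zero]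
      have key : ∀ t : ℝ, ‖(Submodule.Quotient.mk (S t x) : E ⧸ F)‖ ≤ ‖S t x - y‖ := by
        intro t
        have : (Submodule.Quotient.mk (S t x) : E ⧸ F) = Submodule.Quotient.mk (S t x - y) := by
          rw [Submodule.Quotient.eq]
          simpa using hyF
        rw [this]
        exact Submodule.Quotient.norm_mk_le F _
      have hlim : Tendsto (fun t : ℝ => ‖S t x - y‖) atTop (𝓝 0) := by
        have := hy.sub (tendsto_const_nhds (x := y))
        simpa using (tendsto_zero_iff_norm_tendsto_zero.mp (by simpa using this))
      exact squeeze_zero (fun t => norm_nonneg _) key hlim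
    · intro x _
      exact h x
  · rintro ⟨hq, hr⟩ x
    -- show Cauchy
    have cau : CauchySeq (fun t : ℝ => S t x) := by
      rw [Metric.cauchySeq_iff]
      intro ε hε
      -- choose s with small quotient norm
      have hq' := (tendsto_zero_iff_norm_tendsto_zero.mp (hq x))
      rw [Metric.tendsto_atTop] at hq'
      obtain ⟨s₀, hs₀⟩ := hq' (ε / (8 * C')) (by positivity)
      set s : ℝ := max s₀ 1 with hs
      have hs1 : (1:ℝ) ≤ s := le_max_right _ _
      have hspos : 0 < s := lt_of_lt_of_le one_pos hs1
      have hsmall : ‖(Submodule.Quotient.mk (S s x) : E ⧸ F)‖ < ε / (8 * C') := by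
        have := hs₀ s (le_max_left _ _)
        simpa [Real.dist_eq, abs_of_nonneg (norm_nonneg _)] using this
      obtain ⟨f, hf, hfn⟩ := Submodule.Quotient.norm_mk_lt
        (Submodule.Quotient.mk (S s x) : E ⧸ F) (show (0:ℝ) < ε / (8 * C') by positivity)
      have hfn' : ‖f‖ < ε / (4 * C') := by
        have : ε / (8 * C') + ε / (8 * C') = ε / (4 * C') := by ring
        linarith [hsmall]
      -- g := S s x - f ∈ F
      have hgF : S s x - f ∈ F := by
        rw [← Submodule.Quotient.eq]
        exact hf.symm
      set g : E := S s x - f with hg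
      obtain ⟨y, hyF, hy⟩ := hr g hgF
      rw [Metric.tendsto_atTop] at hy
      obtain ⟨T, hT⟩ := hy (ε / 4) (by positivity)
      have key : ∀ t : ℝ, s + max T 0 < t → ‖S t x - y‖ < ε / 2 := by
        intro t ht
        have htpos : 0 < t - s := by
          have : 0 ≤ max T 0 := le_max_right _ _
          linarith
        have hdecomp : S t x = S (t - s) (S s x) := by
          have := hsg (t - s) s htpos hspos
          rw [show t - s + s = t by ring] at this
          rw [this]; rfl
        have hSsx : S s x = g + f := by simp [hg]
        have h1 : ‖S (t - s) f‖ ≤ C' * ‖f‖ := by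
          calc ‖S (t - s) f‖ ≤ ‖S (t - s)‖ * ‖f‖ := (S (t-s)).le_opNorm f
            _ ≤ C' * ‖f‖ := by
                exact mul_le_mul_of_nonneg_right (hCle _ htpos) (norm_nonneg _)
        have h1' : ‖S (t - s) f‖ < ε / 4 := by
          calc ‖S (t - s) f‖ ≤ C' * ‖f‖ := h1
            _ < C' * (ε / (4 * C')) := by
                exact mul_lt_mul_of_pos_left hfn' hC'pos
            _ = ε / 4 := by field_simp
        have h2 : ‖S (t - s) g - y‖ < ε / 4 := by
          have := hT (t - s) (by have := le_max_left T 0; linarith)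
          simpa [dist_eq_norm] using this
        have : S t x - y = (S (t - s) g - y) + S (t - s) f := by
          rw [hdecomp, hSsx, map_add]; abel
        rw [this]
        calc ‖(S (t - s) g - y) + S (t - s) f‖ ≤ ‖S (t - s) g - y‖ + ‖S (t - s) f‖ :=
              norm_add_le _ _
          _ < ε / 4 + ε / 4 := add_lt_add h2 h1'
          _ = ε / 2 := by ring
      refine ⟨s + max T 0 + 1, fun u hu v hv => ?_⟩
      have hu' : s + max T 0 < u := by linarith
      have hv' : s + max T 0 < v := by linarith
      calc dist (S u x) (S v x) ≤ dist (S u x) y + dist y (S v x) := dist_triangle _ _ _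
        _ < ε / 2 + ε / 2 := by
            apply add_lt_add
            · simpa [dist_eq_norm] using key u hu'
            · rw [dist_comm]; simpa [dist_eq_norm] using key v hv'
        _ = ε := by ring
    obtain ⟨y, hy⟩ := cauchySeq_tendsto_of_complete cau
    refine ⟨y, ?_, hy⟩
    -- y ∈ F since F is closed and dist (S t x) F → 0
    suffices h : y ∈ closure (F : Set E) by rwa [hF.closure_eq] at h
    rw [Metric.mem_closure_iff]
    intro ε hε
    have hq' := (tendsto_zero_iff_norm_tendsto_zero.mp (hq x))
    rw [Metric.tendsto_atTop] at hq'
    obtain ⟨T₁, hT₁⟩ := hq' (ε / 4) (by positivity)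
    rw [Metric.tendsto_atTop] at hy
    obtain ⟨T₂, hT₂⟩ := hy (ε / 4) (by positivity)
    set t : ℝ := max T₁ T₂ with ht
    have h1 : ‖(Submodule.Quotient.mk (S t x) : E ⧸ F)‖ < ε / 4 := by
      have := hT₁ t (le_max_left _ _)
      simpa [Real.dist_eq, abs_of_nonneg (norm_nonneg _)] using this
    obtain ⟨m, hm, hmn⟩ := Submodule.Quotient.norm_mk_lt
      (Submodule.Quotient.mk (S t x) : E ⧸ F) (show (0:ℝ) < ε / 4 by positivity)
    have hmF : S t x - m ∈ F := by
      rw [← Submodule.Quotient.eq]; exact hm.symm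
    refine ⟨S t x - m, hmF, ?_⟩
    have h2 : dist (S t x) y < ε / 4 := hT₂ t (le_max_right _ _)
    calc dist y (S t x - m) ≤ dist y (S t x) + dist (S t x) (S t x - m) := dist_triangle _ _ _
      _ < ε / 4 + ε / 2 := by
          apply add_lt_add
          · rw [dist_comm]; exact h2
          · rw [dist_eq_norm]
            simp only [sub_sub_cancel]
            linarith [hmn, h1]
      _ < ε := by linarith
end

section
/- Let E be an AL-space and S = (S_t)_{t∈(0,∞)} a bounded semigroup of positive operators on E. Then for every fixed point x of S (i.e., S_t x = x for all t > 0) there exists a positive fixed point y of S with |x| ≤ y. -/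
/-!
The absolute value of a fixed point `x` is a subfixed point, `|x| ≤ S t |x|`, so by positivity
the orbit `t ↦ S t |x|` is increasing. It is norm-bounded, and in an AL-space a norm-bounded
increasing sequence is Cauchy, because additivity of the norm on the positive cone gives
`‖u n - u m‖ = ‖u n - u 0‖ - ‖u m - u 0‖` for `m ≤ n`. The limit `y` of `S (n + 1) |x|` dominates
the whole orbit, and comparing `S (n + 1) |x| ≤ S t (S (n + 1) |x|) ≤ y` in the limit shows that
`y` is fixed.
-/

open Filter Topology

theorem abs_le_apply_abs_of_apply_eq {α F : Type*} [Lattice α] [AddCommGroup α]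
    [IsOrderedAddMonoid α] [FunLike F α α] [AddMonoidHomClass F α α] {T : F} (hT : Monotone T)
    {x : α} (hx : T x = x) : |x| ≤ T |x| := by
  refine abs_le'.2 ⟨?_, ?_⟩
  · simpa only [hx] using hT (le_abs_self x)
  · simpa only [map_neg, hx] using hT (neg_le_abs x)

theorem cauchySeq_of_monotone_of_norm_le {E : Type*} [NormedAddCommGroup E] [PartialOrder E]
    [IsOrderedAddMonoid E] (hAL : ∀ x y : E, 0 ≤ x → 0 ≤ y → ‖x + y‖ = ‖x‖ + ‖y‖)
    {u : ℕ → E} (hu : Monotone u) {C : ℝ} (hC : ∀ n, ‖u n‖ ≤ C) : CauchySeq u := by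
  set f : ℕ → ℝ := fun n => ‖u n - u 0‖
  have hf_add : ∀ m n, m ≤ n → f n = f m + ‖u n - u m‖ := by
    intro m n hmn
    have h := hAL (u m - u 0) (u n - u m) (sub_nonneg.2 (hu m.zero_le)) (sub_nonneg.2 (hu hmn))
    rwa [sub_add_sub_cancel'] at h
  have hf_mono : Monotone f := fun m n hmn => by
    linarith [hf_add m n hmn, norm_nonneg (u n - u m)]
  have hf_bdd : BddAbove (Set.range f) := by
    refine ⟨C + ‖u 0‖, ?_⟩
    rintro _ ⟨n, rfl⟩
    exact (norm_sub_le _ _).trans (by linarith [hC n])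
  have hf_cauchy : CauchySeq f := (tendsto_atTop_ciSup hf_mono hf_bdd).cauchySeq
  rw [Metric.cauchySeq_iff'] at hf_cauchy ⊢
  intro ε hε
  obtain ⟨N, hN⟩ := hf_cauchy ε hε
  refine ⟨N, fun n hn => ?_⟩
  calc dist (u n) (u N) = dist (f n) (f N) := by
        rw [dist_eq_norm, Real.dist_eq, hf_add N n hn, add_sub_cancel_left,
          abs_of_nonneg (norm_nonneg _)]
    _ < ε := hN n hn

section Semigroup

variable {E : Type*} [NormedAddCommGroup E] [NormedSpace ℝ E] [PartialOrder E]
  {S : ℝ → E →L[ℝ] E} {z y : E}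

theorem monotoneOn_orbit_of_le_apply
    (hsg : ∀ s t : ℝ, 0 < s → 0 < t → S (s + t) = (S s).comp (S t))
    (hmono : ∀ t : ℝ, 0 < t → Monotone (S t)) (hz : ∀ t : ℝ, 0 < t → z ≤ S t z) :
    MonotoneOn (fun t => S t z) (Set.Ioi 0) := by
  intro s hs t _ hst
  rcases hst.eq_or_lt with rfl | hlt
  · exact le_rfl
  · have hts : S t = (S s).comp (S (t - s)) := by
      rw [← hsg s (t - s) hs (sub_pos.2 hlt), add_sub_cancel]
    show S s z ≤ S t z
    rw [hts]
    exact hmono s hs (hz (t - s) (sub_pos.2 hlt))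

theorem monotone_orbit_nat_succ
    (hsg : ∀ s t : ℝ, 0 < s → 0 < t → S (s + t) = (S s).comp (S t))
    (hmono : ∀ t : ℝ, 0 < t → Monotone (S t)) (hz : ∀ t : ℝ, 0 < t → z ≤ S t z) :
    Monotone fun n : ℕ => S (n + 1) z := fun _ _ hmn =>
  monotoneOn_orbit_of_le_apply hsg hmono hz (Set.mem_Ioi.2 (by positivity))
    (Set.mem_Ioi.2 (by positivity)) (by gcongr)

variable [OrderClosedTopology E]

theorem apply_le_of_tendsto_orbit
    (hsg : ∀ s t : ℝ, 0 < s → 0 < t → S (s + t) = (S s).comp (S t))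
    (hmono : ∀ t : ℝ, 0 < t → Monotone (S t)) (hz : ∀ t : ℝ, 0 < t → z ≤ S t z)
    (hy : Tendsto (fun n : ℕ => S (n + 1) z) atTop (𝓝 y)) (s : ℝ) (hs : 0 < s) : S s z ≤ y := by
  obtain ⟨n, hn⟩ := exists_nat_ge s
  exact (monotoneOn_orbit_of_le_apply hsg hmono hz hs (Set.mem_Ioi.2 (by positivity))
    (by linarith)).trans ((monotone_orbit_nat_succ hsg hmono hz).ge_of_tendsto hy n)

theorem apply_eq_of_tendsto_orbit
    (hsg : ∀ s t : ℝ, 0 < s → 0 < t → S (s + t) = (S s).comp (S t))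
    (hmono : ∀ t : ℝ, 0 < t → Monotone (S t)) (hz : ∀ t : ℝ, 0 < t → z ≤ S t z)
    (hy : Tendsto (fun n : ℕ => S (n + 1) z) atTop (𝓝 y)) (t : ℝ) (ht : 0 < t) : S t y = y := by
  have hSy : Tendsto (fun n : ℕ => S t (S (n + 1) z)) atTop (𝓝 (S t y)) :=
    ((S t).continuous.tendsto y).comp hy
  have hshift : ∀ n : ℕ, S t (S (n + 1) z) = S (t + (n + 1)) z := fun n => by
    rw [hsg t _ ht (by positivity), ContinuousLinearMap.comp_apply]
  refine le_antisymm (le_of_tendsto' hSy fun n => ?_) (le_of_tendsto_of_tendsto' hy hSy fun n => ?_)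
  · rw [hshift]
    exact apply_le_of_tendsto_orbit hsg hmono hz hy _ (by positivity)
  · rw [hshift]
    exact monotoneOn_orbit_of_le_apply hsg hmono hz (Set.mem_Ioi.2 (by positivity))
      (Set.mem_Ioi.2 (by positivity)) (by linarith)

end Semigroup

/-- Let `E` be an AL-space and `S = (S t)_{t ∈ (0,∞)}` a bounded semigroup of positive
operators on `E`. Then for every fixed point `x` of `S` there exists a positive fixed
point `y` of `S` with `|x| ≤ y`. -/
theorem exists_positive_fixed_point_dominating_abs
    {E : Type*} [NormedAddCommGroup E] [Lattice E] [HasSolidNorm E] [IsOrderedAddMonoid E] [NormedSpace ℝ E] [CompleteSpace E]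
    (hAL : ∀ x y : E, 0 ≤ x → 0 ≤ y → ‖x + y‖ = ‖x‖ + ‖y‖)
    (S : ℝ → E →L[ℝ] E)
    (hsg : ∀ s t : ℝ, 0 < s → 0 < t → S (s + t) = (S s).comp (S t))
    (hbdd : ∃ C : ℝ, ∀ t : ℝ, 0 < t → ‖S t‖ ≤ C)
    (hpos : ∀ t : ℝ, 0 < t → ∀ x : E, 0 ≤ x → 0 ≤ S t x) :
    ∀ x : E, (∀ t : ℝ, 0 < t → S t x = x) →
      ∃ y : E, 0 ≤ y ∧ (∀ t : ℝ, 0 < t → S t y = y) ∧ |x| ≤ y := by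
  intro x hx
  obtain ⟨C, hC⟩ := hbdd
  have hmono : ∀ t : ℝ, 0 < t → Monotone (S t) := fun t ht =>
    (monotone_iff_map_nonneg (S t)).2 (hpos t ht)
  have hsub : ∀ t : ℝ, 0 < t → |x| ≤ S t |x| := fun t ht =>
    abs_le_apply_abs_of_apply_eq (hmono t ht) (hx t ht)
  have hu_bdd : ∀ n : ℕ, ‖S (n + 1) |x|‖ ≤ C * ‖|x|‖ := fun n =>
    (S _).le_of_opNorm_le (hC ((n : ℝ) + 1) (by positivity)) |x|
  obtain ⟨y, hy⟩ := cauchySeq_tendsto_of_complete (cauchySeq_of_monotone_of_norm_le hAL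
    (monotone_orbit_nat_succ hsg hmono hsub) hu_bdd)
  have hxy : |x| ≤ y :=
    (hsub 1 one_pos).trans (apply_le_of_tendsto_orbit hsg hmono hsub hy 1 one_pos)
  exact ⟨y, (abs_nonneg x).trans hxy, apply_eq_of_tendsto_orbit hsg hmono hsub hy, hxy⟩
end

section
/- Let (Ω,Σ) be a measurable space and let (kₙ) be a sequence of bounded kernels on Ω with sup_{n∈ℕ} sup_{x∈Ω} |kₙ|(x,Ω) < ∞. Let Sₙ and Tₙ be the kernel operators on M(Ω) and on B_b(Ω), respectively, associated with kₙ. Then the following are equivalent: (i) for each x ∈ Ω and each A ∈ Σ the sequence (kₙ(x,A)) converges to a real number k(x,A); (ii) for each μ ∈ M(Ω) the sequence (Sₙμ) converges with respect to the topology σ(M(Ω),B_b(Ω)) to a measure Sμ ∈ M(Ω); (iii) for each f ∈ B_b(Ω) the sequence (Tₙf) converges with respect to the topology σ(B_b(Ω),M(Ω)) to a function Tf ∈ B_b(Ω). If these equivalent assertions hold, then k is a bounded kernel on Ω, S is the kernel operator on M(Ω) associated with k, and T is the kernel operator on B_b(Ω) associated with k. -/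
open MeasureTheory Filter Topology

/-- The integral `∫ f dμ` of a function against a finite signed measure, defined via the
Jordan decomposition of `μ`. -/
noncomputable def sInt {Ω : Type*} [MeasurableSpace Ω] (μ : SignedMeasure Ω) (f : Ω → ℝ) : ℝ :=
  (∫ x, f x ∂μ.toJordanDecomposition.posPart) - ∫ x, f x ∂μ.toJordanDecomposition.negPart

/-- `f` belongs to `B_b(Ω)`, i.e. `f` is a bounded measurable real-valued function. -/
def IsBddMeas {Ω : Type*} [MeasurableSpace Ω] (f : Ω → ℝ) : Prop :=
  Measurable f ∧ ∃ C : ℝ, ∀ x, |f x| ≤ C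

/-- The total variation norm of a finite signed measure. -/
noncomputable def tvNorm {Ω : Type*} [MeasurableSpace Ω] (μ : SignedMeasure Ω) : ℝ :=
  (μ.totalVariation Set.univ).toReal

/-- A bounded kernel on `Ω`: `x ↦ k x` is a family of finite signed measures such that
`x ↦ k x A` is measurable for every measurable `A` and `sup_x |k x|(Ω) < ∞`. -/
def IsBoundedKernel {Ω : Type*} [MeasurableSpace Ω] (k : Ω → SignedMeasure Ω) : Prop :=
  (∀ A : Set Ω, MeasurableSet A → Measurable fun x => k x A) ∧
    ∃ C : ℝ, ∀ x, tvNorm (k x) ≤ C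

/-!
Pointwise convergence of the kernels is recovered from (ii) and (iii) by testing against Dirac
measures and indicator functions.

Conversely, if `kₙ(x, ·)` converges setwise for every `x`, the limit `κ x` is countably additive by
the Nikodym convergence theorem, and `x ↦ κ x A` is measurable as a pointwise limit. Nikodym's
theorem comes from the Baire category theorem in the complete metric space of measurable sets with
distance `ρ (A ∆ B)`, where `ρ = ∑ 2⁻ⁿ |μₙ|` makes every `μₙ` continuous: some ball is uniformly
Cauchy, which makes the limit continuous along decreasing sequences with empty intersection.
Setwise convergence of uniformly bounded signed measures gives convergence of the integrals of
bounded measurable functions, by uniform approximation with simple functions; with dominated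
convergence this yields the convergence of `Sₙ μ` and `Tₙ f`. The measure `S μ` is itself a
setwise limit of the `Sₙ μ`, hence again a signed measure by Nikodym's theorem.
-/

open scoped ENNReal NNReal symmDiff

lemma symmDiff_liminf_subset {α : Type*} (s : ℕ → Set α) (j : ℕ) :
    s j ∆ (⋃ m, ⋂ k, s (m + k)) ⊆ ⋃ i, s (j + i) ∆ s (j + i + 1) := by
  intro x hx
  by_contra hnot
  simp only [Set.mem_iUnion, Set.mem_symmDiff, not_exists, not_or, not_and, not_not] at hnot
  have hconst : ∀ i, x ∈ s (j + i) ↔ x ∈ s j := by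
    intro i
    induction i with
    | zero => rfl
    | succ i ih => exact ⟨fun h => ih.1 ((hnot i).2 h), fun h => (hnot i).1 (ih.2 h)⟩
  simp only [Set.mem_symmDiff, Set.mem_iUnion, Set.mem_iInter] at hx
  rcases hx with ⟨hxj, hxA⟩ | ⟨⟨m, hm⟩, hxj⟩
  · exact hxA ⟨j, fun k => (hconst k).2 hxj⟩
  · exact hxj ((hconst m).1 (add_comm m j ▸ hm j))

lemma antitone_iUnion_add {α : Type*} (f : ℕ → Set α) : Antitone fun N => ⋃ i, f (i + N) :=
  fun N N' hN => Set.iUnion_mono' fun i => ⟨i + (N' - N), by rw [add_assoc, Nat.sub_add_cancel hN]⟩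

lemma iInter_iUnion_add_eq_empty {α : Type*} {f : ℕ → Set α}
    (hdisj : Pairwise (Function.onFun Disjoint f)) : ⋂ N, ⋃ i, f (i + N) = ∅ := by
  refine Set.eq_empty_of_forall_notMem fun x hx => ?_
  simp only [Set.mem_iInter, Set.mem_iUnion] at hx
  obtain ⟨i, hi⟩ := hx 0
  obtain ⟨j, hj⟩ := hx (i + 1)
  exact Set.disjoint_left.1 (hdisj (by omega : i + 0 ≠ j + (i + 1))) hi hj

lemma exists_nonempty_interior_abs_sub_le {X : Type*} [TopologicalSpace X] [BaireSpace X]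
    [Nonempty X] {φ : ℕ → X → ℝ} (hφ : ∀ n, Continuous (φ n))
    (hcauchy : ∀ a, CauchySeq fun n => φ n a) {ε : ℝ} (hε : 0 < ε) :
    ∃ m₀, (interior {a | ∀ p ≥ m₀, ∀ q ≥ m₀, |φ p a - φ q a| ≤ ε}).Nonempty := by
  have hclosed (m : ℕ) : IsClosed {a | ∀ p ≥ m, ∀ q ≥ m, |φ p a - φ q a| ≤ ε} := by
    simp only [Set.ofPred_forall]
    exact isClosed_iInter fun p => isClosed_iInter fun _ => isClosed_iInter fun q =>
      isClosed_iInter fun _ => isClosed_le ((hφ p).sub (hφ q)).abs continuous_const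
  refine nonempty_interior_of_iUnion_of_closed hclosed (Set.eq_univ_of_forall fun a => ?_)
  obtain ⟨N, hN⟩ := Metric.cauchySeq_iff.1 (hcauchy a) ε hε
  exact Set.mem_iUnion.2 ⟨N, fun p hp q hq => (hN p hp q hq).le⟩

section

variable {Ω : Type*} [MeasurableSpace Ω]

lemma tvNorm_nonneg (μ : SignedMeasure Ω) : 0 ≤ tvNorm μ := ENNReal.toReal_nonneg

lemma abs_apply_le_tvNorm (μ : SignedMeasure Ω) (A : Set Ω) : |μ A| ≤ tvNorm μ :=
  (μ.norm_le_totalVariation A).trans (measureReal_mono (Set.subset_univ A))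

lemma tvNorm_le_two_mul {μ : SignedMeasure Ω} {c : ℝ}
    (h : ∀ A, MeasurableSet A → |μ A| ≤ c) : tvNorm μ ≤ 2 * c := by
  obtain ⟨s, hs, hpos, hneg⟩ := μ.toJordanDecomposition.mutuallySingular
  have hP : μ.toJordanDecomposition.posPart.real Set.univ = μ sᶜ := by
    rw [μ.apply_eq_posPart_real_sub_negPart_real hs.compl,
      ← measureReal_add_measureReal_compl hs]
    simp [measureReal_def, hpos, hneg]
  have hN : μ.toJordanDecomposition.negPart.real Set.univ = - μ s := by
    rw [μ.apply_eq_posPart_real_sub_negPart_real hs,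
      ← measureReal_add_measureReal_compl hs]
    simp [measureReal_def, hpos, hneg]
  have h₁ := (abs_le.1 (h sᶜ hs.compl)).2
  have h₂ := (abs_le.1 (h s hs)).1
  rw [tvNorm, SignedMeasure.totalVariation, ← measureReal_def, measureReal_add_apply, hP, hN]
  linarith

lemma tvNorm_le_of_tendsto_apply {μ : ℕ → SignedMeasure Ω} {ν : SignedMeasure Ω} {C : ℝ}
    (hC : ∀ n, tvNorm (μ n) ≤ C)
    (h : ∀ A, MeasurableSet A → Tendsto (fun n => μ n A) atTop (𝓝 (ν A))) :
    tvNorm ν ≤ 2 * C :=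
  tvNorm_le_two_mul fun A hA =>
    le_of_tendsto' (h A hA).abs fun n => (abs_apply_le_tvNorm _ A).trans (hC n)

lemma sum_abs_apply_le_tvNorm (μ : SignedMeasure Ω) {f : ℕ → Set Ω}
    (hf : ∀ i, MeasurableSet (f i)) (hdisj : Pairwise (Function.onFun Disjoint f)) (s : Finset ℕ) :
    ∑ i ∈ s, |μ (f i)| ≤ tvNorm μ :=
  calc ∑ i ∈ s, |μ (f i)| ≤ ∑ i ∈ s, μ.totalVariation.real (f i) :=
        Finset.sum_le_sum fun i _ => μ.norm_le_totalVariation _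
    _ = μ.totalVariation.real (⋃ i ∈ s, f i) :=
        (measureReal_biUnion_finset (fun i _ j _ hij => hdisj hij) fun i _ => hf i).symm
    _ ≤ tvNorm μ := measureReal_mono (Set.subset_univ _)

lemma MeasureTheory.SignedMeasure.abs_apply_sub_apply_le (μ : SignedMeasure Ω) {A B : Set Ω}
    (hA : MeasurableSet A) (hB : MeasurableSet B) :
    |μ A - μ B| ≤ μ.totalVariation.real (A ∆ B) := by
  have hsplit : ∀ {A B : Set Ω}, MeasurableSet A → MeasurableSet B →
      μ A = μ (A ∩ B) + μ (A \ B) := fun hA hB => by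
    rw [← VectorMeasure.of_union (Set.disjoint_sdiff_inter.symm) (hA.inter hB) (hA.diff hB),
      Set.inter_union_sdiff]
  rw [hsplit hA hB, hsplit hB hA, Set.inter_comm, measureReal_symmDiff_eq hA hB]
  calc |μ (B ∩ A) + μ (A \ B) - (μ (B ∩ A) + μ (B \ A))|
      ≤ |μ (A \ B)| + |μ (B \ A)| := by rw [add_sub_add_left_eq_sub]; exact abs_sub _ _
    _ ≤ _ := add_le_add (μ.norm_le_totalVariation _) (μ.norm_le_totalVariation _)

instance MeasureTheory.MeasuredSets.instCompleteSpace {μ : Measure Ω} :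
    CompleteSpace (MeasuredSets μ) := by
  refine EMetric.complete_of_convergent_controlled_sequences (fun n => 2⁻¹ ^ n)
    (fun n => ENNReal.pow_pos (by norm_num) n) fun u hu => ?_
  refine ⟨⟨⋃ m, ⋂ k, u (m + k), .iUnion fun m => .iInter fun k => (u (m + k)).2⟩,
    tendsto_iff_edist_tendsto_0.2 ?_⟩
  have hle (j : ℕ) : edist (u j) ⟨_, .iUnion fun m => .iInter fun k => (u (m + k)).2⟩
      ≤ 2⁻¹ ^ j * 2 :=
    calc _ ≤ μ (⋃ i, (u (j + i) : Set Ω) ∆ u (j + i + 1)) :=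
          measure_mono (symmDiff_liminf_subset (fun n => (u n : Set Ω)) j)
      _ ≤ ∑' i, edist (u (j + i)) (u (j + i + 1)) := measure_iUnion_le _
      _ ≤ ∑' i, (2⁻¹ : ℝ≥0∞) ^ (j + i) :=
          ENNReal.tsum_le_tsum fun i => (hu _ _ _ le_rfl (Nat.le_succ _)).le
      _ = 2⁻¹ ^ j * 2 := by simp only [pow_add, ENNReal.tsum_mul_left, ENNReal.tsum_geometric_two]
  have hlim : Tendsto (fun j : ℕ => (2⁻¹ : ℝ≥0∞) ^ j * 2) atTop (𝓝 0) := by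
    simpa using ENNReal.Tendsto.mul_const
      (ENNReal.tendsto_pow_atTop_nhds_zero_of_lt_one (r := 2⁻¹) (by norm_num)) (b := 2) (by simp)
  exact tendsto_of_tendsto_of_tendsto_of_le_of_le tendsto_const_nhds hlim (fun _ => bot_le) hle

lemma MeasureTheory.SignedMeasure.lipschitzWith_apply {μ : SignedMeasure Ω} {ρ : Measure Ω}
    [IsFiniteMeasure ρ] {c : ℝ≥0} (h : μ.totalVariation ≤ c • ρ) :
    LipschitzWith c fun s : MeasuredSets ρ => μ s := by
  refine LipschitzWith.of_dist_le_mul fun s t => ?_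
  rw [Real.dist_eq, MeasuredSets.dist_def]
  refine (μ.abs_apply_sub_apply_le s.2 t.2).trans ?_
  rw [← measureReal_nnreal_smul_apply]
  exact ENNReal.toReal_mono (measure_ne_top _ _) (h _)

lemma exists_isFiniteMeasure_totalVariation_le {μ : ℕ → SignedMeasure Ω} {C : ℝ}
    (hC : ∀ n, tvNorm (μ n) ≤ C) :
    ∃ ρ : Measure Ω, IsFiniteMeasure ρ ∧ ∀ n, ∃ c : ℝ≥0, (μ n).totalVariation ≤ c • ρ := by
  set ρ := Measure.sum fun n => (2⁻¹ ^ n : ℝ≥0) • (μ n).totalVariation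
  refine ⟨ρ, ⟨?_⟩, fun n => ⟨2 ^ n, ?_⟩⟩
  · calc ρ Set.univ = ∑' n, (2⁻¹ ^ n : ℝ≥0) * (μ n).totalVariation Set.univ := by
          simp [ρ, Measure.sum_apply _ MeasurableSet.univ]
      _ ≤ ∑' n, (2⁻¹ : ℝ≥0∞) ^ n * ENNReal.ofReal C := by
          refine ENNReal.tsum_le_tsum fun n => ?_
          gcongr
          · simp [ENNReal.inv_pow]
          · rw [← ENNReal.ofReal_toReal (measure_ne_top _ _)]
            exact ENNReal.ofReal_le_ofReal (hC n)
      _ < ⊤ := by simp [ENNReal.tsum_mul_right, ENNReal.mul_lt_top]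
  · calc (μ n).totalVariation = (2 ^ n : ℝ≥0) • (2⁻¹ ^ n : ℝ≥0) • (μ n).totalVariation := by
          rw [smul_smul, ← mul_pow, mul_inv_cancel₀ two_ne_zero, one_pow, one_smul]
      _ ≤ (2 ^ n : ℝ≥0) • ρ := fun s => by
          simp only [Measure.smul_apply]
          gcongr
          exact Measure.le_sum _ n s

lemma exists_abs_apply_sub_apply_le {μ : ℕ → SignedMeasure Ω} {ρ : Measure Ω}
    [IsFiniteMeasure ρ] (hρ : ∀ n, Continuous fun s : MeasuredSets ρ => μ n s)
    (hlim : ∀ A, MeasurableSet A → ∃ l, Tendsto (fun n => μ n A) atTop (𝓝 l))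
    {ε : ℝ} (hε : 0 < ε) :
    ∃ m₀, ∃ δ > 0, ∀ p ≥ m₀, ∀ q ≥ m₀, ∀ D, MeasurableSet D → ρ.real D < δ →
      |μ p D - μ q D| ≤ 2 * ε := by
  have : Nonempty (MeasuredSets ρ) := ⟨⟨∅, .empty⟩⟩
  obtain ⟨m₀, a, ha⟩ := exists_nonempty_interior_abs_sub_le hρ
    (fun s => let ⟨_, h⟩ := hlim s s.2; h.cauchySeq) hε
  obtain ⟨δ, hδ, hball⟩ := Metric.isOpen_iff.1 isOpen_interior a ha
  have ha' : MeasurableSet (a : Set Ω) := a.2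
  refine ⟨m₀, δ, hδ, fun p hp q hq D hD hDδ => ?_⟩
  have hnear (b : MeasuredSets ρ) (hb : (b : Set Ω) ∆ a ⊆ D) : |μ p b - μ q b| ≤ ε :=
    interior_subset (hball (Metric.mem_ball.2 ((measureReal_mono hb).trans_lt hDδ))) p hp q hq
  have h₁ := hnear ⟨a ∪ D, ha'.union hD⟩
    (show ((a : Set Ω) ∪ D) ∆ a ⊆ D from fun x => by simp [Set.mem_symmDiff]; tauto)
  have h₂ := hnear ⟨a \ D, ha'.diff hD⟩
    (show ((a : Set Ω) \ D) ∆ a ⊆ D from fun x => by simp [Set.mem_symmDiff]; tauto)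
  have hsplit (n : ℕ) : μ n D = μ n (a ∪ D) - μ n (a \ D) := by
    rw [← Set.sdiff_union_self, VectorMeasure.of_union Set.disjoint_sdiff_left (ha'.diff hD) hD]
    ring
  rw [hsplit p, hsplit q]
  calc _ = |(μ p (a ∪ D) - μ q (a ∪ D)) - (μ p (a \ D) - μ q (a \ D))| := by ring_nf
    _ ≤ ε + ε := (abs_sub _ _).trans (add_le_add h₁ h₂)
    _ = 2 * ε := by ring

lemma tendsto_zero_of_tendsto_apply_antitone {μ : ℕ → SignedMeasure Ω} {C : ℝ}
    (hC : ∀ n, tvNorm (μ n) ≤ C)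
    (hlim : ∀ A, MeasurableSet A → ∃ l, Tendsto (fun n => μ n A) atTop (𝓝 l))
    {B : ℕ → Set Ω} (hB : ∀ j, MeasurableSet (B j)) (hBanti : Antitone B)
    (hBempty : ⋂ j, B j = ∅) {l : ℕ → ℝ}
    (hl : ∀ j, Tendsto (fun n => μ n (B j)) atTop (𝓝 (l j))) :
    Tendsto l atTop (𝓝 0) := by
  obtain ⟨ρ, hρ, hdom⟩ := exists_isFiniteMeasure_totalVariation_le hC
  have hcont (n : ℕ) : Continuous fun s : MeasuredSets ρ => μ n s :=
    let ⟨_, hc⟩ := hdom n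
    (SignedMeasure.lipschitzWith_apply hc).continuous
  have hshrink (ν : Measure Ω) [IsFiniteMeasure ν] :
      Tendsto (fun j => ν.real (B j)) atTop (𝓝 0) := by
    have := tendsto_measure_iInter_atTop (μ := ν) (fun j => (hB j).nullMeasurableSet) hBanti
      ⟨0, measure_ne_top _ _⟩
    rw [hBempty, measure_empty] at this
    exact (ENNReal.tendsto_toReal ENNReal.zero_ne_top).comp this
  refine Metric.tendsto_nhds.2 fun ε hε => ?_
  obtain ⟨m₀, δ, hδ, hsmall⟩ :=
    exists_abs_apply_sub_apply_le hcont hlim (ε := ε / 4) (by positivity)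
  filter_upwards [(hshrink ρ).eventually (gt_mem_nhds hδ),
    (hshrink (μ m₀).totalVariation).eventually (gt_mem_nhds (by positivity : 0 < ε / 4))]
    with j hρj hμj
  have hm₀ : |μ m₀ (B j)| < ε / 4 := ((μ m₀).norm_le_totalVariation _).trans_lt hμj
  have hbound : ∀ p ≥ m₀, |μ p (B j)| ≤ 3 * ε / 4 := fun p hp => by
    have := hsmall p hp m₀ le_rfl (B j) (hB j) hρj
    have := abs_sub_abs_le_abs_sub (μ p (B j)) (μ m₀ (B j))
    linarith
  rw [Real.dist_0_eq_abs]
  exact (le_of_tendsto (hl j).abs (eventually_atTop.2 ⟨m₀, hbound⟩)).trans_lt (by linarith)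

theorem exists_signedMeasure_tendsto_apply {μ : ℕ → SignedMeasure Ω} {C : ℝ}
    (hC : ∀ n, tvNorm (μ n) ≤ C)
    (hlim : ∀ A, MeasurableSet A → ∃ l, Tendsto (fun n => μ n A) atTop (𝓝 l)) :
    ∃ ν : SignedMeasure Ω, ∀ A, MeasurableSet A → Tendsto (fun n => μ n A) atTop (𝓝 (ν A)) := by
  set m : Set Ω → ℝ := fun A => limUnder atTop fun n => μ n A
  have hm (A : Set Ω) : Tendsto (fun n => μ n A) atTop (𝓝 (m A)) := by
    refine tendsto_nhds_limUnder ?_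
    by_cases hA : MeasurableSet A
    · exact hlim A hA
    · exact ⟨0, by simp [VectorMeasure.not_measurable _ hA]⟩
  have hm_zero {A : Set Ω} (hA : ∀ n, μ n A = 0) : m A = 0 :=
    tendsto_nhds_unique (hm A) (by simp [hA])
  refine ⟨{ measureOf' := m
            empty' := hm_zero fun n => (μ n).empty
            not_measurable' := fun A hA => hm_zero fun n => (μ n).not_measurable hA
            m_iUnion' := fun f hf hdisj => ?_ }, fun A _ => hm A⟩
  have hsum : Summable fun i => ‖m (f i)‖ :=
    summable_of_sum_range_le (fun _ => norm_nonneg _) fun N =>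
      le_of_tendsto' (tendsto_finsetSum _ fun i _ => (hm (f i)).norm) fun n =>
        (sum_abs_apply_le_tvNorm (μ n) hf hdisj _).trans (hC n)
  refine (hasSum_iff_tendsto_nat_of_summable_norm hsum).2 ?_
  have htail (N : ℕ) : Tendsto (fun n => μ n (⋃ i, f (i + N))) atTop
      (𝓝 (m (⋃ i, f i) - ∑ i ∈ Finset.range N, m (f i))) := by
    have hsplit (n : ℕ) : μ n (⋃ i, f (i + N)) = μ n (⋃ i, f i) - ∑ i ∈ Finset.range N, μ n (f i) :=
      (((μ n).hasSum_of_disjoint_iUnion (fun i => hf (i + N))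
        (hdisj.comp_of_injective (add_left_injective N))).sum_range_add.unique
        ((μ n).hasSum_of_disjoint_iUnion hf hdisj)).symm ▸ by ring
    simp only [hsplit]
    exact (hm _).sub (tendsto_finsetSum _ fun i _ => hm _)
  have := tendsto_zero_of_tendsto_apply_antitone hC hlim (fun N => .iUnion fun i => hf (i + N))
    (antitone_iUnion_add f) (iInter_iUnion_add_eq_empty hdisj) htail
  simpa using (tendsto_const_nhds (x := m (⋃ i, f i))).sub this

lemma IsBddMeas.integrable {f : Ω → ℝ} (hf : IsBddMeas f) (ν : Measure Ω) [IsFiniteMeasure ν] :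
    Integrable f ν :=
  let ⟨hm, C, hC⟩ := hf
  (integrable_const C).mono' hm.aestronglyMeasurable (.of_forall hC)

lemma MeasureTheory.SimpleFunc.isBddMeas (g : SimpleFunc Ω ℝ) : IsBddMeas g :=
  let ⟨C, hC⟩ := g.exists_forall_norm_le
  ⟨g.measurable, C, hC⟩

lemma isBddMeas_indicator_one {A : Set Ω} (hA : MeasurableSet A) : IsBddMeas (A.indicator 1) :=
  ⟨measurable_one.indicator hA, 1, fun x => by
    by_cases hx : x ∈ A <;> simp [hx]⟩

lemma sInt_sub (μ : SignedMeasure Ω) {f g : Ω → ℝ} (hf : IsBddMeas f) (hg : IsBddMeas g) :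
    sInt μ (f - g) = sInt μ f - sInt μ g := by
  simp only [sInt, Pi.sub_apply, integral_sub (hf.integrable _) (hg.integrable _)]
  ring

lemma abs_sInt_le (μ : SignedMeasure Ω) {f : Ω → ℝ} {M : ℝ} (hM : ∀ x, |f x| ≤ M) :
    |sInt μ f| ≤ M * tvNorm μ := by
  have hbound (ν : Measure Ω) [IsFiniteMeasure ν] : |∫ x, f x ∂ν| ≤ M * ν.real Set.univ :=
    norm_integral_le_of_norm_le_const (f := f) (.of_forall hM)
  rw [tvNorm, SignedMeasure.totalVariation, ← measureReal_def, measureReal_add_apply, mul_add]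
  exact (abs_sub _ _).trans (add_le_add (hbound _) (hbound _))

lemma sInt_simpleFunc (μ : SignedMeasure Ω) (g : SimpleFunc Ω ℝ) :
    sInt μ g = ∑ y ∈ g.range, μ (g ⁻¹' {y}) * y := by
  simp only [sInt, SimpleFunc.integral_eq_sum _ (g.integrable_of_isFiniteMeasure),
    ← Finset.sum_sub_distrib, smul_eq_mul, ← sub_mul,
    μ.apply_eq_posPart_real_sub_negPart_real (g.measurableSet_fiber _)]

lemma sInt_indicator_one (μ : SignedMeasure Ω) {A : Set Ω} (hA : MeasurableSet A) :
    sInt μ (A.indicator 1) = μ A := by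
  simp [sInt, Pi.one_def, integral_indicator_const _ hA,
    μ.apply_eq_posPart_real_sub_negPart_real hA]

lemma sInt_dirac (x : Ω) {f : Ω → ℝ} (hf : Measurable f) :
    sInt (Measure.dirac x).toSignedMeasure f = f x := by
  -- Writing `δₓ = δₓ - 0` exposes its Jordan decomposition `(δₓ, 0)`.
  have : (Measure.dirac x).toSignedMeasure =
      (Measure.dirac x).toSignedMeasure - (0 : Measure Ω).toSignedMeasure := by simp
  rw [sInt, this, Measure.toJordanDecomposition_toSignedMeasure_sub]
  simp [Measure.jordanDecompositionOfToSignedMeasureSub_posPart,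
    Measure.jordanDecompositionOfToSignedMeasureSub_negPart,
    integral_dirac' f x hf.stronglyMeasurable]

lemma tendsto_sInt_of_dominated (μ : SignedMeasure Ω) {g : ℕ → Ω → ℝ} {f : Ω → ℝ} {C : ℝ}
    (hg : ∀ n, Measurable (g n)) (hC : ∀ n x, |g n x| ≤ C)
    (hlim : ∀ x, Tendsto (fun n => g n x) atTop (𝓝 (f x))) :
    Tendsto (fun n => sInt μ (g n)) atTop (𝓝 (sInt μ f)) := by
  have hdom (ν : Measure Ω) [IsFiniteMeasure ν] :
      Tendsto (fun n => ∫ x, g n x ∂ν) atTop (𝓝 (∫ x, f x ∂ν)) :=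
    tendsto_integral_of_dominated_convergence (fun _ => C)
      (fun n => (hg n).aestronglyMeasurable) (integrable_const C)
      (fun n => .of_forall (hC n)) (.of_forall hlim)
  exact (hdom _).sub (hdom _)

lemma exists_simpleFunc_abs_sub_le {f : Ω → ℝ} (hf : IsBddMeas f) {η : ℝ} (hη : 0 < η) :
    ∃ g : SimpleFunc Ω ℝ, ∀ x, |f x - g x| ≤ η := by
  obtain ⟨hm, M, hM⟩ := hf
  have hgm : Measurable fun x => η * ⌊f x / η⌋ :=
    measurable_const.mul ((measurable_of_countable _).comp (hm.div_const η).floor)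
  refine ⟨{ toFun := fun x => η * ⌊f x / η⌋
            measurableSet_fiber' := fun y => hgm (measurableSet_singleton y)
            finite_range' :=
              ((Set.finite_Icc ⌊-M / η⌋ ⌊M / η⌋).image fun j : ℤ => η * j).subset ?_ },
          fun x => ?_⟩
  · rintro _ ⟨x, rfl⟩
    have hx := abs_le.1 (hM x)
    exact ⟨_, ⟨Int.floor_le_floor (by gcongr; exact hx.1),
      Int.floor_le_floor (by gcongr; exact hx.2)⟩, rfl⟩
  · show |f x - η * ⌊f x / η⌋| ≤ η
    rw [show f x - η * ⌊f x / η⌋ = η * Int.fract (f x / η) by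
        rw [Int.fract, mul_sub, mul_div_cancel₀ _ hη.ne'],
      abs_of_nonneg (mul_nonneg hη.le (Int.fract_nonneg _))]
    exact mul_le_of_le_one_right hη.le (Int.fract_lt_one _).le

lemma exists_simpleFunc_tendstoUniformly {f : Ω → ℝ} (hf : IsBddMeas f) :
    ∃ g : ℕ → SimpleFunc Ω ℝ, TendstoUniformly (fun m => ⇑(g m)) f atTop := by
  choose g hg using fun m : ℕ => exists_simpleFunc_abs_sub_le hf (Nat.one_div_pos_of_nat (n := m))
  refine ⟨g, Metric.tendstoUniformly_iff.2 fun ε hε => ?_⟩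
  obtain ⟨N, hN⟩ := exists_nat_one_div_lt hε
  filter_upwards [eventually_ge_atTop N] with m hm x
  refine ((hg m x).trans ?_).trans_lt hN
  gcongr

lemma tendstoUniformly_sInt {ι : Type*} {ν : ι → SignedMeasure Ω} {C : ℝ}
    (hC : ∀ i, tvNorm (ν i) ≤ C) {p : Filter ℕ} {g : ℕ → Ω → ℝ} {f : Ω → ℝ}
    (hg : TendstoUniformly g f p) (hgb : ∀ m, IsBddMeas (g m)) (hf : IsBddMeas f) :
    TendstoUniformly (fun m i => sInt (ν i) (g m)) (fun i => sInt (ν i) f) p := by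
  rw [Metric.tendstoUniformly_iff] at hg ⊢
  intro ε hε
  have hε' : 0 < ε / (|C| + 1) := by positivity
  filter_upwards [hg _ hε'] with m hm i
  rw [Real.dist_eq, ← sInt_sub _ hf (hgb m)]
  calc |sInt (ν i) (f - g m)| ≤ ε / (|C| + 1) * tvNorm (ν i) :=
        abs_sInt_le _ fun x => (hm x).le
    _ ≤ ε / (|C| + 1) * |C| := by gcongr; exact (hC i).trans (le_abs_self C)
    _ < ε := by
        rw [div_mul_eq_mul_div, div_lt_iff₀ (by positivity)]
        nlinarith

lemma tendsto_sInt_of_tendsto_apply {ν : ℕ → SignedMeasure Ω} {ν' : SignedMeasure Ω} {C : ℝ}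
    (hC : ∀ n, tvNorm (ν n) ≤ C)
    (hlim : ∀ A, MeasurableSet A → Tendsto (fun n => ν n A) atTop (𝓝 (ν' A)))
    {f : Ω → ℝ} (hf : IsBddMeas f) :
    Tendsto (fun n => sInt (ν n) f) atTop (𝓝 (sInt ν' f)) := by
  obtain ⟨g, hg⟩ := exists_simpleFunc_tendstoUniformly hf
  have hgb : ∀ m, IsBddMeas (g m) := fun m => (g m).isBddMeas
  have hsimple (m : ℕ) : Tendsto (fun n => sInt (ν n) (g m)) atTop (𝓝 (sInt ν' (g m))) := by
    simp only [sInt_simpleFunc]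
    exact tendsto_finsetSum _ fun y _ =>
      (hlim _ ((g m).measurableSet_fiber y)).mul_const y
  have hν' : TendstoUniformly (fun m (_ : Unit) => sInt ν' (g m)) (fun _ => sInt ν' f) atTop :=
    tendstoUniformly_sInt (fun _ => tvNorm_le_of_tendsto_apply hC hlim) hg hgb hf
  exact (tendstoUniformly_sInt hC hg hgb hf).tendsto_of_eventually_tendsto
    (.of_forall hsimple) (hν'.tendsto_at ())

lemma measurable_sInt {κ : Ω → SignedMeasure Ω}
    (hκ : ∀ A, MeasurableSet A → Measurable fun x => κ x A) {C : ℝ}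
    (hC : ∀ x, tvNorm (κ x) ≤ C) {f : Ω → ℝ} (hf : IsBddMeas f) :
    Measurable fun x => sInt (κ x) f := by
  obtain ⟨g, hg⟩ := exists_simpleFunc_tendstoUniformly hf
  refine measurable_of_tendsto_metrizable (fun m => ?_) (tendsto_pi_nhds.2
    (tendstoUniformly_sInt hC hg (fun m => (g m).isBddMeas) hf).tendsto_at)
  simp only [sInt_simpleFunc]
  exact Finset.measurable_sum _ fun y _ => (hκ _ ((g m).measurableSet_fiber y)).mul_const y

lemma isBddMeas_sInt {κ : Ω → SignedMeasure Ω} (hκ : IsBoundedKernel κ) {f : Ω → ℝ}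
    (hf : IsBddMeas f) : IsBddMeas fun x => sInt (κ x) f := by
  obtain ⟨hmeas, C, hC⟩ := hκ
  obtain ⟨M, hM⟩ := hf.2
  exact ⟨measurable_sInt hmeas hC hf, |M| * |C|, fun x => (abs_sInt_le _ hM).trans
    (mul_le_mul (le_abs_self M) ((hC x).trans (le_abs_self C)) (tvNorm_nonneg _) (abs_nonneg M))⟩

section Kernels

variable {k : ℕ → Ω → SignedMeasure Ω}

lemma exists_tendsto_kernel_of_measureOp
    (hk : ∀ n A, MeasurableSet A → Measurable fun x => k n x A)
    {S : ℕ → SignedMeasure Ω → SignedMeasure Ω}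
    (hS : ∀ n ν A, MeasurableSet A → S n ν A = sInt ν fun x => k n x A)
    (h : ∀ μ : SignedMeasure Ω, ∃ Sμ : SignedMeasure Ω, ∀ f : Ω → ℝ, IsBddMeas f →
      Tendsto (fun n => sInt (S n μ) f) atTop (𝓝 (sInt Sμ f)))
    (x : Ω) (A : Set Ω) (hA : MeasurableSet A) :
    ∃ l : ℝ, Tendsto (fun n => k n x A) atTop (𝓝 l) := by
  obtain ⟨Sμ, hSμ⟩ := h (Measure.dirac x).toSignedMeasure
  refine ⟨_, (hSμ _ (isBddMeas_indicator_one hA)).congr fun n => ?_⟩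
  rw [sInt_indicator_one _ hA, hS n _ A hA, sInt_dirac x (hk n A hA)]

lemma exists_tendsto_kernel_of_functionOp
    (hk : ∀ n A, MeasurableSet A → Measurable fun x => k n x A)
    {T : ℕ → (Ω → ℝ) → Ω → ℝ}
    (hT : ∀ n f, IsBddMeas f → ∀ x, T n f x = sInt (k n x) f)
    (h : ∀ f : Ω → ℝ, IsBddMeas f → ∃ Tf : Ω → ℝ, IsBddMeas Tf ∧ ∀ μ : SignedMeasure Ω,
      Tendsto (fun n => sInt μ (T n f)) atTop (𝓝 (sInt μ Tf)))
    (x : Ω) (A : Set Ω) (hA : MeasurableSet A) :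
    ∃ l : ℝ, Tendsto (fun n => k n x A) atTop (𝓝 l) := by
  obtain ⟨Tf, hTf, hlim⟩ := h _ (isBddMeas_indicator_one hA)
  have hTn (n : ℕ) : T n (A.indicator 1) = fun y => k n y A :=
    funext fun y => by rw [hT n _ (isBddMeas_indicator_one hA), sInt_indicator_one _ hA]
  have := hlim (Measure.dirac x).toSignedMeasure
  rw [sInt_dirac x hTf.1] at this
  exact ⟨Tf x, this.congr fun n => by rw [hTn, sInt_dirac x (hk n A hA)]⟩

variable {C : ℝ}

lemma exists_boundedKernel_tendsto
    (hk : ∀ n A, MeasurableSet A → Measurable fun x => k n x A)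
    (hC : ∀ n x, tvNorm (k n x) ≤ C)
    (hlim : ∀ x A, MeasurableSet A → ∃ l : ℝ, Tendsto (fun n => k n x A) atTop (𝓝 l)) :
    ∃ κ : Ω → SignedMeasure Ω, IsBoundedKernel κ ∧
      ∀ x A, MeasurableSet A → Tendsto (fun n => k n x A) atTop (𝓝 (κ x A)) := by
  choose κ hκ using fun x => exists_signedMeasure_tendsto_apply (hC · x) (hlim x)
  exact ⟨κ, ⟨fun A hA => measurable_of_tendsto_metrizable (fun n => hk n A hA)
    (tendsto_pi_nhds.2 fun x => hκ x A hA), 2 * C,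
    fun x => tvNorm_le_of_tendsto_apply (hC · x) (hκ x)⟩, hκ⟩

variable {κ : Ω → SignedMeasure Ω}

lemma exists_tendsto_sInt_measureOp
    (hk : ∀ n A, MeasurableSet A → Measurable fun x => k n x A)
    (hC : ∀ n x, tvNorm (k n x) ≤ C)
    (hκ : ∀ x A, MeasurableSet A → Tendsto (fun n => k n x A) atTop (𝓝 (κ x A)))
    {σ : ℕ → SignedMeasure Ω} {ν : SignedMeasure Ω}
    (hσ : ∀ n A, MeasurableSet A → σ n A = sInt ν fun x => k n x A) :
    ∃ σ' : SignedMeasure Ω, (∀ A, MeasurableSet A → σ' A = sInt ν fun x => κ x A) ∧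
      ∀ f, IsBddMeas f → Tendsto (fun n => sInt (σ n) f) atTop (𝓝 (sInt σ' f)) := by
  have hkC (n : ℕ) (x : Ω) (A : Set Ω) : |k n x A| ≤ C := (abs_apply_le_tvNorm _ A).trans (hC n x)
  have hσC (n : ℕ) : tvNorm (σ n) ≤ 2 * (C * tvNorm ν) :=
    tvNorm_le_two_mul fun A hA => hσ n A hA ▸ abs_sInt_le ν (hkC n · A)
  have hlim (A : Set Ω) (hA : MeasurableSet A) :
      Tendsto (fun n => σ n A) atTop (𝓝 (sInt ν fun x => κ x A)) := by
    simp only [hσ _ A hA]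
    exact tendsto_sInt_of_dominated ν (fun n => hk n A hA) (hkC · · A) fun x => hκ x A hA
  obtain ⟨σ', hσ'⟩ := exists_signedMeasure_tendsto_apply hσC fun A hA => ⟨_, hlim A hA⟩
  exact ⟨σ', fun A hA => tendsto_nhds_unique (hσ' A hA) (hlim A hA),
    fun f hf => tendsto_sInt_of_tendsto_apply hσC hσ' hf⟩

lemma tendsto_sInt_sInt_kernel
    (hk : ∀ n A, MeasurableSet A → Measurable fun x => k n x A)
    (hC : ∀ n x, tvNorm (k n x) ≤ C)
    (hκ : ∀ x A, MeasurableSet A → Tendsto (fun n => k n x A) atTop (𝓝 (κ x A)))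
    {f : Ω → ℝ} (hf : IsBddMeas f) (μ : SignedMeasure Ω) :
    Tendsto (fun n => sInt μ fun x => sInt (k n x) f) atTop
      (𝓝 (sInt μ fun x => sInt (κ x) f)) := by
  obtain ⟨M, hM⟩ := hf.2
  exact tendsto_sInt_of_dominated μ (fun n => measurable_sInt (hk n) (hC n) hf)
    (fun n x => (abs_sInt_le _ hM).trans
      (mul_le_mul (le_abs_self M) (hC n x) (tvNorm_nonneg _) (abs_nonneg M)))
    fun x => tendsto_sInt_of_tendsto_apply (hC · x) (hκ x) hf

lemma exists_limit_kernel_operators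
    (hk : ∀ n A, MeasurableSet A → Measurable fun x => k n x A)
    (hC : ∀ n x, tvNorm (k n x) ≤ C) {S : ℕ → SignedMeasure Ω → SignedMeasure Ω}
    (hS : ∀ n ν A, MeasurableSet A → S n ν A = sInt ν fun x => k n x A)
    {T : ℕ → (Ω → ℝ) → Ω → ℝ} (hT : ∀ n f, IsBddMeas f → ∀ x, T n f x = sInt (k n x) f)
    (hlim : ∀ x A, MeasurableSet A → ∃ l : ℝ, Tendsto (fun n => k n x A) atTop (𝓝 l)) :
    ∃ κ : Ω → SignedMeasure Ω, IsBoundedKernel κ ∧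
      (∀ (x : Ω) (A : Set Ω), MeasurableSet A →
        Tendsto (fun n => k n x A) atTop (𝓝 (κ x A))) ∧
      (∃ S' : SignedMeasure Ω → SignedMeasure Ω,
        (∀ (ν : SignedMeasure Ω) (A : Set Ω), MeasurableSet A →
          S' ν A = sInt ν (fun x => κ x A)) ∧
        ∀ (μ : SignedMeasure Ω) (f : Ω → ℝ), IsBddMeas f →
          Tendsto (fun n => sInt (S n μ) f) atTop (𝓝 (sInt (S' μ) f))) ∧
      (∃ T' : (Ω → ℝ) → Ω → ℝ,
        (∀ f : Ω → ℝ, IsBddMeas f → ∀ x, T' f x = sInt (κ x) f) ∧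
        ∀ f : Ω → ℝ, IsBddMeas f → ∀ μ : SignedMeasure Ω,
          Tendsto (fun n => sInt μ (T n f)) atTop (𝓝 (sInt μ (T' f)))) := by
  obtain ⟨κ, hκ, hκlim⟩ := exists_boundedKernel_tendsto hk hC hlim
  choose S' hS'κ hS'lim using fun ν => exists_tendsto_sInt_measureOp hk hC hκlim (hS · ν)
  refine ⟨κ, hκ, hκlim, ⟨S', hS'κ, hS'lim⟩,
    ⟨fun f x => sInt (κ x) f, fun _ _ _ => rfl, fun f hf μ => ?_⟩⟩
  simpa only [fun n => funext (hT n f hf)] using tendsto_sInt_sInt_kernel hk hC hκlim hf μ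

end Kernels

end

/-- **Convergence of kernel operators (Proposition on sequences of kernels).**
Let `(kₙ)` be a uniformly bounded sequence of bounded kernels on a measurable space `Ω`,
with associated kernel operators `Sₙ` on `M(Ω)` and `Tₙ` on `B_b(Ω)`. Then the pointwise
convergence of the kernels, the `σ(M(Ω), B_b(Ω))`-convergence of `(Sₙ μ)` for every `μ`,
and the `σ(B_b(Ω), M(Ω))`-convergence of `(Tₙ f)` for every `f` are all equivalent; and in
this case the limits are given by a bounded limit kernel `κ` and its associated kernel
operators. -/
theorem kernel_operator_sequence_convergence_tfae
    {Ω : Type*} [MeasurableSpace Ω]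
    (k : ℕ → Ω → SignedMeasure Ω)
    (hk : ∀ n, IsBoundedKernel (k n))
    (hbdd : ∃ C : ℝ, ∀ n x, tvNorm (k n x) ≤ C)
    (S : ℕ → SignedMeasure Ω → SignedMeasure Ω)
    (hS : ∀ n (ν : SignedMeasure Ω) (A : Set Ω), MeasurableSet A →
      S n ν A = sInt ν (fun x => k n x A))
    (T : ℕ → (Ω → ℝ) → Ω → ℝ)
    (hT : ∀ n (f : Ω → ℝ), IsBddMeas f → ∀ x, T n f x = sInt (k n x) f) :
    -- the three assertions are equivalent:
    (((∀ (x : Ω) (A : Set Ω), MeasurableSet A →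
        ∃ l : ℝ, Tendsto (fun n => k n x A) atTop (𝓝 l)) ↔
      (∀ μ : SignedMeasure Ω, ∃ Sμ : SignedMeasure Ω, ∀ f : Ω → ℝ, IsBddMeas f →
        Tendsto (fun n => sInt (S n μ) f) atTop (𝓝 (sInt Sμ f)))) ∧
    ((∀ μ : SignedMeasure Ω, ∃ Sμ : SignedMeasure Ω, ∀ f : Ω → ℝ, IsBddMeas f →
        Tendsto (fun n => sInt (S n μ) f) atTop (𝓝 (sInt Sμ f))) ↔
      (∀ f : Ω → ℝ, IsBddMeas f → ∃ Tf : Ω → ℝ, IsBddMeas Tf ∧ ∀ μ : SignedMeasure Ω,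
        Tendsto (fun n => sInt μ (T n f)) atTop (𝓝 (sInt μ Tf))))) ∧
    -- and if they hold, the limits come from a bounded limit kernel:
    ((∀ (x : Ω) (A : Set Ω), MeasurableSet A →
        ∃ l : ℝ, Tendsto (fun n => k n x A) atTop (𝓝 l)) →
      ∃ κ : Ω → SignedMeasure Ω, IsBoundedKernel κ ∧
        (∀ (x : Ω) (A : Set Ω), MeasurableSet A →
          Tendsto (fun n => k n x A) atTop (𝓝 (κ x A))) ∧
        (∃ S' : SignedMeasure Ω → SignedMeasure Ω,
          (∀ (ν : SignedMeasure Ω) (A : Set Ω), MeasurableSet A →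
            S' ν A = sInt ν (fun x => κ x A)) ∧
          ∀ (μ : SignedMeasure Ω) (f : Ω → ℝ), IsBddMeas f →
            Tendsto (fun n => sInt (S n μ) f) atTop (𝓝 (sInt (S' μ) f))) ∧
        (∃ T' : (Ω → ℝ) → Ω → ℝ,
          (∀ f : Ω → ℝ, IsBddMeas f → ∀ x, T' f x = sInt (κ x) f) ∧
          ∀ f : Ω → ℝ, IsBddMeas f → ∀ μ : SignedMeasure Ω,
            Tendsto (fun n => sInt μ (T n f)) atTop (𝓝 (sInt μ (T' f))))) := by
  obtain ⟨C, hC⟩ := hbdd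
  have hkm (n : ℕ) := (hk n).1
  have hlimit := exists_limit_kernel_operators hkm hC hS hT
  have h21 := exists_tendsto_kernel_of_measureOp hkm hS
  have h31 := exists_tendsto_kernel_of_functionOp hkm hT
  refine ⟨⟨⟨fun h μ => ?_, h21⟩, fun h f hf => ?_, fun h μ => ?_⟩, hlimit⟩
  · obtain ⟨-, -, -, ⟨S', -, hS'⟩, -⟩ := hlimit h
    exact ⟨S' μ, hS' μ⟩
  · obtain ⟨κ, hκ, -, -, T', hT'κ, hT'⟩ := hlimit (h21 h)
    exact ⟨T' f, funext (hT'κ f hf) ▸ isBddMeas_sInt hκ hf, hT' f hf⟩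
  · obtain ⟨-, -, -, ⟨S', -, hS'⟩, -⟩ := hlimit (h31 h)
    exact ⟨S' μ, hS' μ⟩
end

section
/- Let (Ω,Σ) be a measurable space, let S be a positive kernel operator on M(Ω) with associated kernel k, and assume there is a finite positive measure μ ∈ M(Ω) such that for every x ∈ Ω the measure k(x,·) is absolutely continuous with respect to μ. Then: (a) for every ν ∈ M(Ω), the measure Sν is absolutely continuous with respect to μ (i.e., the range of S is contained in the band {μ}^{⊥⊥} generated by μ in M(Ω)); (b) the norm adjoint S* maps the norm dual M(Ω)* into B_b(Ω), i.e., for every bounded linear functional φ on M(Ω) there exists f ∈ B_b(Ω) such that ⟨S*φ,ν⟩ = ∫_Ω f dν for all ν ∈ M(Ω). -/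
open MeasureTheory Filter Topology

/-!
Restricted to measures absolutely continuous with respect to a finite measure `m`, a bounded
functional `φ` on `M(Ω)` is a bounded functional on `L¹(m)`. The set function `A ↦ φ(m|_A)` is
finitely additive and dominated by `‖φ‖ m`, hence countably additive and absolutely continuous
with respect to `m`; its Radon–Nikodym density `g` satisfies `|g| ≤ ‖φ‖`, and `φ(ρ m) = ∫ g ρ dm`
extends from indicators to all `ρ ∈ L¹(m)` by continuity.

Since `k(x, ·) ≥ 0`, `k` is a finite kernel `κ`, and `S ν = κ ∘ ν⁺ - κ ∘ ν⁻` is a difference of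
finite measures absolutely continuous with respect to `m = |μ|`. Therefore
`φ(S ν) = ∫ g d(κ ∘ ν⁺) - ∫ g d(κ ∘ ν⁻) = ∫ f dν` for the bounded measurable `f x = ∫ g dκ(x)`.
-/

open ProbabilityTheory
open scoped Function

section

variable {Ω : Type*} [MeasurableSpace Ω]

lemma IsBddMeas.integrable_s9 {g : Ω → ℝ} (hg : IsBddMeas g) (m : Measure Ω) [IsFiniteMeasure m] :
    Integrable g m :=
  let ⟨hg_meas, C, hC⟩ := hg
  .of_bound hg_meas.aestronglyMeasurable C (ae_of_all _ hC)

lemma tvNorm_withDensityᵥ_le {m : Measure Ω} {ρ : Ω → ℝ} (hρ : Integrable ρ m) :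
    tvNorm (m.withDensityᵥ ρ) ≤ ∫ x, |ρ x| ∂m := by
  have hvar : (m.withDensityᵥ ρ).variation ≤ m.withDensity fun x => ‖ρ x‖ₑ :=
    VectorMeasure.variation_le_of_forall_enorm_le fun A hA => by
      rw [withDensityᵥ_apply hρ hA, withDensity_apply _ hA]
      exact enorm_integral_le_lintegral_enorm _
  simp_rw [tvNorm, SignedMeasure.totalVariation_eq_variation, ← Real.norm_eq_abs,
    integral_norm_eq_lintegral_enorm hρ.1]
  refine ENNReal.toReal_mono hρ.2.ne ?_
  simpa using hvar Set.univ

lemma abs_apply_withDensityᵥ_le {m : Measure Ω} {φ : SignedMeasure Ω →ₗ[ℝ] ℝ} {C : ℝ}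
    (hC : 0 ≤ C) (hφ : ∀ ν, |φ ν| ≤ C * tvNorm ν) {ρ : Ω → ℝ} (hρ : Integrable ρ m) :
    |φ (m.withDensityᵥ ρ)| ≤ C * ∫ x, |ρ x| ∂m :=
  (hφ _).trans (mul_le_mul_of_nonneg_left (tvNorm_withDensityᵥ_le hρ) hC)

lemma continuous_L1_of_abs_le_integral {m : Measure Ω} (F : (Ω → ℝ) → ℝ) {C : ℝ}
    (hF_sub : ∀ f g, Integrable f m → Integrable g m → F (f - g) = F f - F g)
    (hF_le : ∀ f, Integrable f m → |F f| ≤ C * ∫ x, |f x| ∂m) :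
    Continuous fun f : Ω →₁[m] ℝ => F f := by
  refine (LipschitzWith.of_dist_le' (K := C) fun f g => ?_).continuous
  rw [Real.dist_eq, ← hF_sub _ _ (L1.integrable_coeFn f) (L1.integrable_coeFn g),
    L1.dist_eq_integral_dist]
  simpa only [Real.dist_eq, Pi.sub_apply] using
    hF_le _ ((L1.integrable_coeFn f).sub (L1.integrable_coeFn g))

section AbsLeMeasureReal

variable {m : Measure Ω} [IsFiniteMeasure m] {ψ : Set Ω → ℝ} {C : ℝ}

lemma biUnion_finset_eq_sum_of_union_eq_add (hψ_empty : ψ ∅ = 0)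
    (hψ_union : ∀ A B, MeasurableSet A → MeasurableSet B → Disjoint A B →
      ψ (A ∪ B) = ψ A + ψ B)
    {g : ℕ → Set Ω} (hg : ∀ i, MeasurableSet (g i)) (hdisj : Pairwise (Disjoint on g))
    (s : Finset ℕ) : ψ (⋃ i ∈ s, g i) = ∑ i ∈ s, ψ (g i) := by
  induction s using Finset.induction with
  | empty => simpa using hψ_empty
  | @insert a s ha ih =>
    have hdisj' : Disjoint (g a) (⋃ i ∈ s, g i) :=
      Set.disjoint_iUnion₂_right.2 fun i hi => hdisj fun h => ha (h ▸ hi)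
    rw [Finset.set_biUnion_insert,
      hψ_union _ _ (hg a) (s.measurableSet_biUnion fun i _ => hg i) hdisj', ih,
      Finset.sum_insert ha]

lemma hasSum_of_abs_le_measureReal
    (hψ_union : ∀ A B, MeasurableSet A → MeasurableSet B → Disjoint A B →
      ψ (A ∪ B) = ψ A + ψ B)
    (hψ_le : ∀ A, MeasurableSet A → |ψ A| ≤ C * m.real A)
    {g : ℕ → Set Ω} (hg : ∀ i, MeasurableSet (g i)) (hdisj : Pairwise (Disjoint on g)) :
    HasSum (fun i => ψ (g i)) (ψ (⋃ i, g i)) := by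
  have hψ_empty : ψ ∅ = 0 := abs_nonpos_iff.1 (by simpa using hψ_le ∅ .empty)
  set T := ⋃ i, g i
  have hT : MeasurableSet T := .iUnion hg
  have hrem : ∀ s : Finset ℕ,
      |ψ T - ∑ i ∈ s, ψ (g i)| ≤ C * (m.real T - ∑ i ∈ s, m.real (g i)) := by
    intro s
    have hB : MeasurableSet (⋃ i ∈ s, g i) := s.measurableSet_biUnion fun i _ => hg i
    have hBT : (⋃ i ∈ s, g i) ⊆ T := Set.iUnion₂_subset fun i _ => Set.subset_iUnion g i
    have hsplit := hψ_union _ _ hB (hT.diff hB) Set.disjoint_sdiff_right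
    rw [Set.union_sdiff_cancel hBT] at hsplit
    rw [← biUnion_finset_eq_sum_of_union_eq_add hψ_empty hψ_union hg hdisj,
      ← measureReal_biUnion_finset (fun i _ j _ hij => hdisj hij) fun i _ => hg i,
      ← measureReal_sdiff hBT hB, hsplit, add_sub_cancel_left]
    exact hψ_le _ (hT.diff hB)
  have hm : HasSum (fun i => m.real (g i)) (m.real T) := by
    simpa [hg, MeasurableSet.iUnion hg] using m.toSignedMeasure.hasSum_of_disjoint_iUnion hg hdisj
  have hlim : Tendsto (fun s : Finset ℕ => C * (m.real T - ∑ i ∈ s, m.real (g i))) atTop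
      (𝓝 0) := by
    simpa using (tendsto_const_nhds (x := m.real T)).sub hm |>.const_mul C
  refine tendsto_iff_norm_sub_tendsto_zero.2 <| squeeze_zero_norm (fun s => ?_) hlim
  rw [norm_norm, norm_sub_rev, Real.norm_eq_abs]
  exact hrem s

variable (m ψ C) in
open Classical in
noncomputable def signedMeasureOfAbsLe
    (hψ_union : ∀ A B, MeasurableSet A → MeasurableSet B → Disjoint A B →
      ψ (A ∪ B) = ψ A + ψ B)
    (hψ_le : ∀ A, MeasurableSet A → |ψ A| ≤ C * m.real A) : SignedMeasure Ω where
  measureOf' A := if MeasurableSet A then ψ A else 0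
  empty' := by simpa using abs_nonpos_iff.1 (by simpa using hψ_le ∅ .empty)
  not_measurable' _ hA := if_neg hA
  m_iUnion' g hg hdisj := by
    simpa only [if_pos (hg _), if_pos (MeasurableSet.iUnion hg)] using
      hasSum_of_abs_le_measureReal hψ_union hψ_le hg hdisj

lemma signedMeasureOfAbsLe_apply
    (hψ_union : ∀ A B, MeasurableSet A → MeasurableSet B → Disjoint A B →
      ψ (A ∪ B) = ψ A + ψ B)
    (hψ_le : ∀ A, MeasurableSet A → |ψ A| ≤ C * m.real A) {A : Set Ω} (hA : MeasurableSet A) :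
    signedMeasureOfAbsLe m ψ C hψ_union hψ_le A = ψ A :=
  if_pos hA

end AbsLeMeasureReal

theorem MeasureTheory.SignedMeasure.exists_bounded_density {m : Measure Ω} [IsFiniteMeasure m]
    (s : SignedMeasure Ω) {C : ℝ} (hC : 0 ≤ C)
    (hs : ∀ A, MeasurableSet A → |s A| ≤ C * m.real A) :
    ∃ g : Ω → ℝ, Measurable g ∧ (∀ x, |g x| ≤ C) ∧ s = m.withDensityᵥ g := by
  have hac : s ≪ᵥ m.toENNRealVectorMeasure := .mk fun A hA hmA => by
    rw [Measure.toENNRealVectorMeasure_apply_measurable hA] at hmA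
    simpa [Measure.real, hmA] using hs A hA
  set g := s.rnDeriv m
  have hg : Integrable g m := s.integrable_rnDeriv m
  have hs_eq : m.withDensityᵥ g = s := s.withDensityᵥ_rnDeriv_eq m hac
  have hset : ∀ A, MeasurableSet A → |∫ x in A, g x ∂m| ≤ ∫ x in A, C ∂m := fun A hA => by
    simpa [← hs_eq, withDensityᵥ_apply hg hA, mul_comm] using hs A hA
  have hg_le : ∀ᵐ x ∂m, |g x| ≤ C := by
    have hupper := ae_le_of_forall_setIntegral_le hg (integrable_const C)
      fun A hA _ => (le_abs_self _).trans (hset A hA)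
    have hlower := ae_le_of_forall_setIntegral_le (integrable_const (-C)) hg
      fun A hA _ => by rw [integral_neg]; exact neg_le.1 ((neg_le_abs _).trans (hset A hA))
    filter_upwards [hupper, hlower] with x hxu hxl using abs_le.2 ⟨hxl, hxu⟩
  refine ⟨fun x => max (-C) (min C (g x)), by fun_prop, fun x => abs_le.2
    ⟨le_max_left _ _, max_le (by linarith) (min_le_left _ _)⟩, ?_⟩
  rw [← hs_eq]
  refine WithDensityᵥEq.congr_ae ?_
  filter_upwards [hg_le] with x hx
  rw [abs_le] at hx
  simp [hx.1, hx.2]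

section Representation

variable {m : Measure Ω} {φ : SignedMeasure Ω →ₗ[ℝ] ℝ} {C : ℝ}

lemma exists_bounded_setIntegral_eq [IsFiniteMeasure m] (hC : 0 ≤ C)
    (hφ : ∀ ν, |φ ν| ≤ C * tvNorm ν) :
    ∃ g : Ω → ℝ, Measurable g ∧ (∀ x, |g x| ≤ C) ∧
      ∀ A, MeasurableSet A → φ (m.withDensityᵥ (A.indicator 1)) = ∫ x in A, g x ∂m := by
  set ψ : Set Ω → ℝ := fun A => φ (m.withDensityᵥ (A.indicator 1))
  have hψ_union : ∀ A B, MeasurableSet A → MeasurableSet B → Disjoint A B →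
      ψ (A ∪ B) = ψ A + ψ B := fun A B hA hB hAB => by
    simp only [ψ, Set.indicator_union_of_disjoint hAB, ← map_add]
    rw [← withDensityᵥ_add' ((integrable_const 1).indicator hA)
      ((integrable_const 1).indicator hB)]
  have hψ_le : ∀ A, MeasurableSet A → |ψ A| ≤ C * m.real A := fun A hA => by
    have habs : (fun x => |A.indicator (1 : Ω → ℝ) x|) = A.indicator 1 :=
      funext fun x => abs_of_nonneg (Set.indicator_nonneg (fun _ _ => zero_le_one) x)
    have := abs_apply_withDensityᵥ_le (m := m) (ρ := A.indicator 1) hC hφ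
      ((integrable_const 1).indicator hA)
    rwa [habs, integral_indicator_one hA] at this
  obtain ⟨g, hg_meas, hg_le, hg⟩ := SignedMeasure.exists_bounded_density
    (signedMeasureOfAbsLe m ψ C hψ_union hψ_le) hC fun A hA => by
      rw [signedMeasureOfAbsLe_apply _ _ hA]; exact hψ_le A hA
  refine ⟨g, hg_meas, hg_le, fun A hA => ?_⟩
  change ψ A = _
  rw [← signedMeasureOfAbsLe_apply hψ_union hψ_le hA, hg,
    withDensityᵥ_apply (IsBddMeas.integrable_s9 ⟨hg_meas, C, hg_le⟩ m) hA]

lemma apply_withDensityᵥ_eq_integral_mul (hC : 0 ≤ C) (hφ : ∀ ν, |φ ν| ≤ C * tvNorm ν)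
    {g : Ω → ℝ} (hg_meas : Measurable g) (hg_le : ∀ x, |g x| ≤ C)
    (hg : ∀ A, MeasurableSet A → φ (m.withDensityᵥ (A.indicator 1)) = ∫ x in A, g x ∂m)
    {ρ : Ω → ℝ} (hρ : Integrable ρ m) : φ (m.withDensityᵥ ρ) = ∫ x, g x * ρ x ∂m := by
  have hg_mul : ∀ ρ, Integrable ρ m → Integrable (fun x => g x * ρ x) m := fun ρ hρ =>
    hρ.bdd_mul hg_meas.aestronglyMeasurable (ae_of_all _ hg_le)
  have hg_mul_le : ∀ ρ, Integrable ρ m → |∫ x, g x * ρ x ∂m| ≤ C * ∫ x, |ρ x| ∂m :=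
    fun ρ hρ => by
      rw [← integral_const_mul, ← Real.norm_eq_abs]
      refine norm_integral_le_of_norm_le (hρ.abs.const_mul C) (ae_of_all _ fun x => ?_)
      rw [Real.norm_eq_abs, abs_mul]
      exact mul_le_mul_of_nonneg_right (hg_le x) (abs_nonneg _)
  refine Integrable.induction (P := fun ρ => φ (m.withDensityᵥ ρ) = ∫ x, g x * ρ x ∂m)
    ?_ ?_ ?_ ?_ hρ
  · intro c A hA _
    have hind : A.indicator (fun _ => c) = c • A.indicator (1 : Ω → ℝ) := by
      ext x; by_cases hx : x ∈ A <;> simp [hx]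
    calc φ (m.withDensityᵥ (A.indicator fun _ => c)) = c * ∫ x in A, g x ∂m := by
          rw [hind, withDensityᵥ_smul (A.indicator (1 : Ω → ℝ)) c, map_smul, smul_eq_mul,
            hg A hA]
      _ = ∫ x, g x * A.indicator (fun _ => c) x ∂m := by
          rw [← integral_const_mul, ← integral_indicator hA]
          congr 1; ext x; by_cases hx : x ∈ A <;> simp [hx, mul_comm]
  · intro f₁ f₂ _ hf₁ hf₂ h₁ h₂
    rw [withDensityᵥ_add hf₁ hf₂, map_add, h₁, h₂,
      ← integral_add (hg_mul _ hf₁) (hg_mul _ hf₂)]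
    simp only [Pi.add_apply, mul_add]
  · refine isClosed_eq
      (continuous_L1_of_abs_le_integral _ (fun f₁ f₂ hf₁ hf₂ => ?_)
        fun _ => abs_apply_withDensityᵥ_le hC hφ)
      (continuous_L1_of_abs_le_integral _ (fun f₁ f₂ hf₁ hf₂ => ?_) hg_mul_le)
    · rw [withDensityᵥ_sub hf₁ hf₂, map_sub]
    · simp only [Pi.sub_apply, mul_sub]
      exact integral_sub (hg_mul _ hf₁) (hg_mul _ hf₂)
  · intro f₁ f₂ hf _ h
    rw [← WithDensityᵥEq.congr_ae hf, h]
    exact integral_congr_ae (hf.mono fun x hx => by simp only [hx])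

theorem exists_bounded_integral_repr [IsFiniteMeasure m] (hC : 0 ≤ C)
    (hφ : ∀ ν, |φ ν| ≤ C * tvNorm ν) :
    ∃ g : Ω → ℝ, Measurable g ∧ (∀ x, |g x| ≤ C) ∧
      ∀ ρ, Integrable ρ m → φ (m.withDensityᵥ ρ) = ∫ x, g x * ρ x ∂m := by
  obtain ⟨g, hg_meas, hg_le, hg⟩ := exists_bounded_setIntegral_eq (m := m) hC hφ
  exact ⟨g, hg_meas, hg_le, fun _ => apply_withDensityᵥ_eq_integral_mul hC hφ hg_meas hg_le hg⟩

lemma apply_toSignedMeasure_eq_integral [IsFiniteMeasure m] {P : Measure Ω} [IsFiniteMeasure P]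
    (hPm : P ≪ m) {g : Ω → ℝ} (hg : ∀ ρ, Integrable ρ m → φ (m.withDensityᵥ ρ) = ∫ x, g x * ρ x ∂m) :
    φ P.toSignedMeasure = ∫ x, g x ∂P := by
  have hdens : P.toSignedMeasure = m.withDensityᵥ fun x => (P.rnDeriv m x).toReal := by
    rw [withDensityᵥ_toReal (Measure.measurable_rnDeriv P m).aemeasurable
      (Measure.lintegral_rnDeriv_lt_top P m).ne]
    simp_rw [Measure.withDensity_rnDeriv_eq P m hPm]
  rw [hdens, hg _ Measure.integrable_toReal_rnDeriv, ← integral_rnDeriv_smul hPm]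
  simp_rw [smul_eq_mul, mul_comm]

end Representation

section Kernel

variable {α : Type*} [MeasurableSpace α] {κ : Kernel α Ω}

lemma MeasureTheory.Measure.comp_absolutelyContinuous {ν : Measure α} {m : Measure Ω}
    (h : ∀ x, κ x ≪ m) : κ ∘ₘ ν ≪ m := .mk fun A hA hmA => by
  simp [Measure.bind_apply hA κ.aemeasurable, h _ hmA]

lemma MeasureTheory.Measure.integral_comp_kernel {ν : Measure α} {f : Ω → ℝ}
    (hf : Integrable f (κ ∘ₘ ν)) : ∫ y, f y ∂(κ ∘ₘ ν) = ∫ x, ∫ y, f y ∂κ x ∂ν := by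
  rw [Measure.comp_eq_comp_const_apply] at hf ⊢
  rw [Kernel.integral_comp hf, Kernel.const_apply]

variable [IsFiniteKernel κ]

lemma MeasureTheory.Measure.real_comp_apply {ν : Measure α} [IsFiniteMeasure ν] {A : Set Ω}
    (hA : MeasurableSet A) : (κ ∘ₘ ν).real A = ∫ x, (κ x).real A ∂ν := by
  simp_rw [← integral_indicator_one hA]
  exact Measure.integral_comp_kernel ((integrable_const 1).indicator hA)

lemma IsBddMeas.integral_kernel {g : Ω → ℝ} (hg : IsBddMeas g) :
    IsBddMeas fun x => ∫ y, g y ∂κ x := by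
  obtain ⟨hg_meas, C, hC⟩ := hg
  refine ⟨hg_meas.stronglyMeasurable.integral_kernel.measurable, max C 0 * κ.bound.toReal,
    fun x => ?_⟩
  calc |∫ y, g y ∂κ x| ≤ max C 0 * (κ x).real Set.univ :=
        norm_integral_le_of_norm_le_const (f := g)
          (ae_of_all _ fun y => (hC y).trans (le_max_left _ _))
    _ ≤ max C 0 * κ.bound.toReal := mul_le_mul_of_nonneg_left
        (ENNReal.toReal_mono κ.bound_ne_top (κ.measure_le_bound x _)) (le_max_right _ _)

lemma eq_toSignedMeasure_comp_sub {ν : SignedMeasure α} {s : SignedMeasure Ω}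
    (h : ∀ A, MeasurableSet A → s A = sInt ν fun x => (κ x).real A) :
    s = (κ ∘ₘ ν.toJordanDecomposition.posPart).toSignedMeasure
      - (κ ∘ₘ ν.toJordanDecomposition.negPart).toSignedMeasure := by
  ext A hA
  rw [h A hA, sInt, _root_.sub_apply, Measure.toSignedMeasure_apply_measurable hA,
    Measure.toSignedMeasure_apply_measurable hA, Measure.real_comp_apply hA,
    Measure.real_comp_apply hA]

end Kernel

section KernelOfNonneg

variable {α : Type*} [MeasurableSpace α]

noncomputable def kernelOfNonneg (k : α → SignedMeasure Ω)
    (hk_meas : ∀ A, MeasurableSet A → Measurable fun x => k x A)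
    (hk_nonneg : ∀ x A, MeasurableSet A → 0 ≤ k x A) : Kernel α Ω where
  toFun x := (k x).toMeasureOfZeroLE Set.univ .univ
    ((VectorMeasure.restrict_le_restrict_iff _ _ .univ).2 fun A hA _ => hk_nonneg x A hA)
  measurable' := by
    refine Measure.measurable_of_measurable_coe _ fun A hA => ?_
    simp_rw [SignedMeasure.toMeasureOfZeroLE_apply _ _ _ hA, Set.univ_inter,
      ← ENNReal.ofReal_eq_coe_nnreal]
    exact ENNReal.measurable_ofReal.comp (hk_meas A hA)

variable {k : α → SignedMeasure Ω} {hk_meas : ∀ A, MeasurableSet A → Measurable fun x => k x A}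
  {hk_nonneg : ∀ x A, MeasurableSet A → 0 ≤ k x A}

instance (x : α) : IsFiniteMeasure (kernelOfNonneg k hk_meas hk_nonneg x) :=
  SignedMeasure.toMeasureOfZeroLE_finite _ _ .univ

lemma kernelOfNonneg_real_apply (x : α) {A : Set Ω} (hA : MeasurableSet A) :
    (kernelOfNonneg k hk_meas hk_nonneg x).real A = k x A := by
  rw [← Measure.toSignedMeasure_apply_measurable hA]
  exact congrArg (fun s : SignedMeasure Ω => s A)
    (SignedMeasure.toMeasureOfZeroLE_toSignedMeasure _ _)

lemma isFiniteKernel_kernelOfNonneg {C : ℝ} (hC : ∀ x, tvNorm (k x) ≤ C) :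
    IsFiniteKernel (kernelOfNonneg k hk_meas hk_nonneg) := by
  refine ⟨ENNReal.ofReal C, ENNReal.ofReal_lt_top, fun x => ?_⟩
  rw [← ofReal_measureReal, kernelOfNonneg_real_apply x .univ]
  exact ENNReal.ofReal_le_ofReal <| (le_abs_self _).trans <|
    ((k x).norm_le_totalVariation _).trans (hC x)

end KernelOfNonneg

end

theorem kernel_operator_range_in_band_and_adjoint_into_Bb_general
    {Ω : Type*} [MeasurableSpace Ω]
    (k : Ω → SignedMeasure Ω)
    (hk : IsBoundedKernel k)
    (hkpos : ∀ (x : Ω) (A : Set Ω), MeasurableSet A → 0 ≤ k x A)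
    (S : SignedMeasure Ω → SignedMeasure Ω)
    (hS : ∀ (ν : SignedMeasure Ω) (A : Set Ω), MeasurableSet A →
      S ν A = sInt ν (fun x => k x A))
    (μ : SignedMeasure Ω)
    (hac : ∀ (x : Ω) (A : Set Ω), MeasurableSet A → μ A = 0 → k x A = 0) :
    -- (a) `S ν` is absolutely continuous with respect to `μ` for every `ν`:
    (∀ (ν : SignedMeasure Ω) (A : Set Ω), MeasurableSet A → μ A = 0 → S ν A = 0) ∧
    -- (b) every bounded linear functional on `M(Ω)`, composed with `S`, is represented by
    -- integration against a bounded measurable function: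
    (∀ φ : SignedMeasure Ω →ₗ[ℝ] ℝ, (∃ C : ℝ, ∀ ν : SignedMeasure Ω, |φ ν| ≤ C * tvNorm ν) →
      ∃ f : Ω → ℝ, IsBddMeas f ∧ ∀ ν : SignedMeasure Ω, φ (S ν) = sInt ν f) := by
  refine ⟨fun ν A hA hμA => ?_, fun φ ⟨C, hφ⟩ => ?_⟩
  · simp [hS ν A hA, hac _ A hA hμA, sInt]
  obtain ⟨Ck, hCk⟩ := hk.2
  set κ := kernelOfNonneg k hk.1 hkpos
  have : IsFiniteKernel κ := isFiniteKernel_kernelOfNonneg hCk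
  have hκμ : ∀ x, κ x ≪ μ.totalVariation := fun x => .mk fun A hA hμA => by
    rw [← ofReal_measureReal, kernelOfNonneg_real_apply x hA,
      hac x A hA (μ.null_of_totalVariation_zero hμA), ENNReal.ofReal_zero]
  obtain ⟨g, hg_meas, hg_le, hφg⟩ := exists_bounded_integral_repr (m := μ.totalVariation)
    (le_max_right C 0) fun ν =>
      (hφ ν).trans (mul_le_mul_of_nonneg_right (le_max_left _ _) ENNReal.toReal_nonneg)
  have hg : IsBddMeas g := ⟨hg_meas, _, hg_le⟩
  refine ⟨fun x => ∫ y, g y ∂κ x, hg.integral_kernel, fun ν => ?_⟩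
  have hSν : ∀ A, MeasurableSet A → S ν A = sInt ν fun x => (κ x).real A := fun A hA => by
    simp only [hS ν A hA, κ, kernelOfNonneg_real_apply _ hA]
  have hφ_comp (ν' : Measure Ω) [IsFiniteMeasure ν'] :
      φ (κ ∘ₘ ν').toSignedMeasure = ∫ x, ∫ y, g y ∂κ x ∂ν' := by
    rw [apply_toSignedMeasure_eq_integral (Measure.comp_absolutelyContinuous hκμ) hφg,
      Measure.integral_comp_kernel (hg.integrable_s9 _)]
  rw [eq_toSignedMeasure_comp_sub hSν, map_sub, hφ_comp, hφ_comp, sInt]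

/-- Let `S` be a positive kernel operator on `M(Ω)` with kernel `k`, and assume there is a
finite positive measure `μ` such that `k (x, ·) ≪ μ` for every `x`. Then (a) the range of
`S` is contained in the band generated by `μ`, i.e. `S ν ≪ μ` for all `ν`; and (b) the norm
adjoint `S*` maps the norm dual `M(Ω)*` into `B_b(Ω)`. -/
theorem kernel_operator_range_in_band_and_adjoint_into_Bb
    {Ω : Type*} [MeasurableSpace Ω]
    (k : Ω → SignedMeasure Ω)
    (hk : IsBoundedKernel k)
    (hkpos : ∀ (x : Ω) (A : Set Ω), MeasurableSet A → 0 ≤ k x A)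
    (S : SignedMeasure Ω → SignedMeasure Ω)
    (hS : ∀ (ν : SignedMeasure Ω) (A : Set Ω), MeasurableSet A →
      S ν A = sInt ν (fun x => k x A))
    (μ : SignedMeasure Ω) (hμpos : 0 ≤ μ)
    (hac : ∀ (x : Ω) (A : Set Ω), MeasurableSet A → μ A = 0 → k x A = 0) :
    -- (a) `S ν` is absolutely continuous with respect to `μ` for every `ν`:
    (∀ (ν : SignedMeasure Ω) (A : Set Ω), MeasurableSet A → μ A = 0 → S ν A = 0) ∧
    -- (b) every bounded linear functional on `M(Ω)`, composed with `S`, is represented by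
    -- integration against a bounded measurable function:
    (∀ φ : SignedMeasure Ω →ₗ[ℝ] ℝ, (∃ C : ℝ, ∀ ν : SignedMeasure Ω, |φ ν| ≤ C * tvNorm ν) →
      ∃ f : Ω → ℝ, IsBddMeas f ∧ ∀ ν : SignedMeasure Ω, φ (S ν) = sInt ν f) :=
  kernel_operator_range_in_band_and_adjoint_into_Bb_general k hk hkpos S hS μ hac
end
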